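/- arXiv:2305.04096 — 6 statements merged into one kernel-verified Lean document; each statement's English description precedes it below -/
import Mathlib

section
/- Consider a configuration ⟨v,P⟩ of an MVPP optional-grabbing pawn game, let j be the pawn owning v, and let P' ⊆ P. (i) Assuming that j ∈ P implies j ∈ P', if Player 1 wins from ⟨v,P⟩ then Player 1 wins from ⟨v,P'⟩. (ii) Assuming that j ∉ P' implies j ∉ P, if Player 2 wins from ⟨v,P'⟩ then Player 2 wins from ⟨v,P⟩. -/
open scoped Classical

/-- A strategy maps the history of previously visited positions and the current
position to a next position. -/
abbrev Strat (Pos : Type*) := List Pos → Pos → Pos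

/-- A two-player turn-based game with positions `Pos`: `move` is the edge relation
(every position has a successor), `turn1 p` holds when Player 1 is the one to move at `p`,
and `target` is Player 1's reachability objective. -/
structure TB (Pos : Type*) where
  move : Pos → Pos → Prop
  total : ∀ p, ∃ q, move p q
  turn1 : Pos → Prop
  target : Pos → Prop

namespace TB

variable {Pos : Type*} (g : TB Pos)

/-- A strategy is legal if it always moves along edges of the game. -/
def Legal (f : Strat Pos) : Prop := ∀ h p, g.move p (f h p)

/-- The history (first component) and current position (second component) of the play
after `n` steps, when the game starts at `p0` and the players use `f1` and `f2`. -/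
noncomputable def histPlay (f1 f2 : Strat Pos) (p0 : Pos) : ℕ → List Pos × Pos
  | 0 => ([], p0)
  | n + 1 =>
      let hp : List Pos × Pos := histPlay f1 f2 p0 n
      (hp.1 ++ [hp.2], if g.turn1 hp.2 then f1 hp.1 hp.2 else f2 hp.1 hp.2)

/-- The position of the play after `n` steps. -/
noncomputable def play (f1 f2 : Strat Pos) (p0 : Pos) (n : ℕ) : Pos :=
  (g.histPlay f1 f2 p0 n).2

/-- Player 1 has a winning strategy from `p0`: some legal strategy such that against every
legal Player 2 strategy the play visits the target. -/
def Win1 (p0 : Pos) : Prop :=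
  ∃ f1, g.Legal f1 ∧ ∀ f2, g.Legal f2 → ∃ n, g.target (g.play f1 f2 p0 n)

/-- Player 2 has a winning strategy from `p0`: some legal strategy such that against every
legal Player 1 strategy the play never visits the target. -/
def Win2 (p0 : Pos) : Prop :=
  ∃ f2, g.Legal f2 ∧ ∀ f1, g.Legal f1 → ∀ n, ¬ g.target (g.play f1 f2 p0 n)

end TB

/-- An MVPP pawn game: a directed graph in which every vertex has a successor, each
vertex `w` is owned by the unique pawn `owner w`, and `target` is Player 1's objective. -/
structure PawnGame (V : Type*) (ι : Type*) where
  E : V → V → Prop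
  total : ∀ w, ∃ u, E w u
  owner : V → ι
  target : V → Prop

/-- Positions of the turn-based game induced by a pawn game under a grabbing mechanism:
`conf w P` is a configuration (token on `w`, Player 1 controls the pawns in `P`), and
`mid u w P` is the intermediate position after the token was moved from `w` to `u`. -/
inductive GPos (V : Type*) (ι : Type*) where
  | conf (w : V) (P : Set ι)
  | mid (u w : V) (P : Set ι)

/-- Moves of the optional-grabbing mechanism. -/
inductive OGMove {V ι : Type*} (G : PawnGame V ι) : GPos V ι → GPos V ι → Prop
  | step {w u : V} {P : Set ι} : G.E w u → OGMove G (.conf w P) (.mid u w P)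
  | noGrab {u w : V} {P : Set ι} : OGMove G (.mid u w P) (.conf u P)
  | grabBy2 {u w : V} {P : Set ι} {j : ι} :
      G.owner w ∈ P → j ∈ P → OGMove G (.mid u w P) (.conf u (P \ {j}))
  | grabBy1 {u w : V} {P : Set ι} {j : ι} :
      G.owner w ∉ P → j ∉ P → OGMove G (.mid u w P) (.conf u (insert j P))

/-- The turn-based game induced by an optional-grabbing pawn game. -/
def PawnGame.OG {V ι : Type*} (G : PawnGame V ι) : TB (GPos V ι) where
  move := OGMove G
  total := by
    rintro (⟨w, P⟩ | ⟨u, w, P⟩)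
    · obtain ⟨u, hu⟩ := G.total w
      exact ⟨.mid u w P, .step hu⟩
    · exact ⟨.conf u P, .noGrab⟩
  turn1 := fun p =>
    match p with
    | .conf w P => G.owner w ∈ P
    | .mid _ w P => G.owner w ∉ P
  target := fun p =>
    match p with
    | .conf w _ => G.target w
    | .mid _ _ _ => False

namespace SimAux

/-- Run a step function over a chronological list, keeping track of the previous element. -/
def runL {σ α : Type*} (st : σ → α → α → σ) : σ → α → List α → σ
  | s, _, [] => s
  | s, prev, x :: rest => runL st (st s prev x) x rest

/-- Reconstruct state from a history `h` and current element `x`. -/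
def reconG {σ α : Type*} (st : σ → α → α → σ) (s0 : σ) : List α → α → σ
  | [], _ => s0
  | hd :: tl, x => runL st s0 hd (tl ++ [x])

lemma runL_concat {σ α : Type*} (st : σ → α → α → σ) (s : σ) (prev : α) (l : List α) (x : α) :
    runL st s prev (l ++ [x]) = st (runL st s prev l) (l.getLastD prev) x := by
  induction l generalizing s prev with
  | nil => simp [runL]
  | cons a tl ih =>
    simp only [List.cons_append, runL, List.getLastD_cons]
    exact ih _ _

lemma reconG_snoc {σ α : Type*} (st : σ → α → α → σ) (s0 : σ) (h : List α) (p x : α) :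
    reconG st s0 (h ++ [p]) x = st (reconG st s0 h p) p x := by
  cases h with
  | nil => simp [reconG, runL]
  | cons hd tl =>
    show runL st s0 hd ((tl ++ [p]) ++ [x]) = _
    rw [runL_concat]
    simp [reconG, List.getLastD_concat]

noncomputable def defMv {Pos : Type*} (g : TB Pos) (p : Pos) : Pos := Classical.choose (g.total p)

lemma defMv_legal {Pos : Type*} (g : TB Pos) (p : Pos) : g.move p (defMv g p) :=
  Classical.choose_spec (g.total p)

theorem sim_transfer {Pos Pos' : Type*} (g : TB Pos) (g' : TB Pos') (R : Pos → Pos' → Prop)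
    (p0 : Pos) (p0' : Pos')
    (hR0 : R p0 p0')
    (htar : ∀ p p', R p p' → g.target p → g'.target p')
    (hturn : ∀ p p', R p p' → (g.turn1 p ↔ g'.turn1 p'))
    (h3 : ∀ p p' q, R p p' → g.turn1 p → g.move p q → ∃ q', g'.move p' q' ∧ R q q')
    (h4 : ∀ p p' q', R p p' → ¬ g.turn1 p → g'.move p' q' → ∃ q, g.move p q ∧ R q q') :
    (g.Win1 p0 → g'.Win1 p0') ∧ (g'.Win2 p0' → g.Win2 p0) := by
  have h3' : ∀ p p' q, ∃ q', g'.move p' q' ∧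
      (R p p' → g.turn1 p → g.move p q → R q q') := by
    intro p p' q
    by_cases h : R p p' ∧ g.turn1 p ∧ g.move p q
    · obtain ⟨q', hm, hr⟩ := h3 p p' q h.1 h.2.1 h.2.2
      exact ⟨q', hm, fun _ _ _ => hr⟩
    · exact ⟨defMv g' p', defMv_legal g' p', fun a b c => absurd ⟨a, b, c⟩ h⟩
  have h4' : ∀ p p' q', ∃ q, g.move p q ∧
      (R p p' → ¬ g.turn1 p → g'.move p' q' → R q q') := by
    intro p p' q'
    by_cases h : R p p' ∧ ¬ g.turn1 p ∧ g'.move p' q'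
    · obtain ⟨q, hm, hr⟩ := h4 p p' q' h.1 h.2.1 h.2.2
      exact ⟨q, hm, fun _ _ _ => hr⟩
    · exact ⟨defMv g p, defMv_legal g p, fun a b c => absurd ⟨a, b, c⟩ h⟩
  choose F3f hF3m hF3r using h3'
  choose F4f hF4m hF4r using h4'
  constructor
  · -- Win1 transfer
    rintro ⟨f1, hf1, hw⟩
    set st : (List Pos × Pos) → Pos' → Pos' → (List Pos × Pos) :=
      fun s prev x => (s.1 ++ [s.2], if g.turn1 s.2 then f1 s.1 s.2 else F4f s.2 prev x)
      with hst
    set rc : List Pos' → Pos' → List Pos × Pos := reconG st ([], p0) with hrcdef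
    set f1' : Strat Pos' := fun h' p' => F3f (rc h' p').2 p' (f1 (rc h' p').1 (rc h' p').2)
      with hf1'def
    refine ⟨f1', fun h p => hF3m _ _ _, ?_⟩
    intro f2' hf2'
    set f2 : Strat Pos := fun h p =>
      F4f p (g'.histPlay f1' f2' p0' h.length).2
        (f2' (g'.histPlay f1' f2' p0' h.length).1 (g'.histPlay f1' f2' p0' h.length).2)
      with hf2def
    have hf2 : g.Legal f2 := fun h p => hF4m _ _ _
    have key : ∀ n, (g.histPlay f1 f2 p0 n).1.length = n ∧
        rc (g'.histPlay f1' f2' p0' n).1 (g'.histPlay f1' f2' p0' n).2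
          = g.histPlay f1 f2 p0 n ∧
        R (g.histPlay f1 f2 p0 n).2 (g'.histPlay f1' f2' p0' n).2 := by
      intro n
      induction n with
      | zero => exact ⟨rfl, rfl, hR0⟩
      | succ n ih =>
        obtain ⟨hlen, hrc, hR⟩ := ih
        set s := g.histPlay f1 f2 p0 n with hs
        set s' := g'.histPlay f1' f2' p0' n with hs'
        have hstep : g.histPlay f1 f2 p0 (n + 1)
            = (s.1 ++ [s.2], if g.turn1 s.2 then f1 s.1 s.2 else f2 s.1 s.2) := rfl
        have hstep' : g'.histPlay f1' f2' p0' (n + 1)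
            = (s'.1 ++ [s'.2], if g'.turn1 s'.2 then f1' s'.1 s'.2 else f2' s'.1 s'.2) := rfl
        rw [hstep, hstep']
        have hrcs : ∀ x, rc (s'.1 ++ [s'.2]) x = st s s'.2 x := by
          intro x
          rw [hrcdef, reconG_snoc]
          rw [show reconG st ([], p0) s'.1 s'.2 = s from hrc]
        by_cases ht : g.turn1 s.2
        · have ht' : g'.turn1 s'.2 := (hturn _ _ hR).1 ht
          have hp' : f1' s'.1 s'.2 = F3f s.2 s'.2 (f1 s.1 s.2) := by
            simp only [hf1'def, hrc]
          refine ⟨by simp [hlen], ?_, ?_⟩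
          · rw [if_pos ht', hp', hrcs, hst]
            simp only
            rw [if_pos ht, if_pos ht]
          · simp only
            rw [if_pos ht, if_pos ht', hp']
            exact hF3r _ _ _ hR ht (hf1 _ _)
        · have ht' : ¬ g'.turn1 s'.2 := fun c => ht ((hturn _ _ hR).2 c)
          have hp2 : f2 s.1 s.2 = F4f s.2 s'.2 (f2' s'.1 s'.2) := by
            simp only [hf2def, hlen, ← hs']
          refine ⟨by simp [hlen], ?_, ?_⟩
          · rw [if_neg ht', hrcs, hst]
            simp only
            rw [if_neg ht, if_neg ht, hp2]
          · simp only
            rw [if_neg ht, if_neg ht', hp2]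
            exact hF4r _ _ _ hR ht (hf2' _ _)
    obtain ⟨n, hn⟩ := hw f2 hf2
    exact ⟨n, htar _ _ (key n).2.2 hn⟩
  · -- Win2 transfer
    rintro ⟨f2', hf2', hw⟩
    set st2 : (List Pos' × Pos') → Pos → Pos → (List Pos' × Pos') :=
      fun s prev x => (s.1 ++ [s.2], if g'.turn1 s.2 then F3f prev s.2 x else f2' s.1 s.2)
      with hst2
    set rc2 : List Pos → Pos → List Pos' × Pos' := reconG st2 ([], p0') with hrc2def
    set f2 : Strat Pos := fun h p => F4f p (rc2 h p).2 (f2' (rc2 h p).1 (rc2 h p).2)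
      with hf2def
    refine ⟨f2, fun h p => hF4m _ _ _, ?_⟩
    intro f1 hf1 n
    set f1'' : Strat Pos' := fun h' p' =>
      F3f (g.histPlay f1 f2 p0 h'.length).2 p' (g.histPlay f1 f2 p0 (h'.length + 1)).2
      with hf1''def
    have hf1''L : g'.Legal f1'' := fun h p => hF3m _ _ _
    have key : ∀ n, (g.histPlay f1 f2 p0 n).1.length = n ∧
        (g'.histPlay f1'' f2' p0' n).1.length = n ∧
        rc2 (g.histPlay f1 f2 p0 n).1 (g.histPlay f1 f2 p0 n).2
          = g'.histPlay f1'' f2' p0' n ∧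
        R (g.histPlay f1 f2 p0 n).2 (g'.histPlay f1'' f2' p0' n).2 := by
      intro n
      induction n with
      | zero => exact ⟨rfl, rfl, rfl, hR0⟩
      | succ n ih =>
        obtain ⟨hlen, hlen', hrc, hR⟩ := ih
        set s := g.histPlay f1 f2 p0 n with hs
        set s' := g'.histPlay f1'' f2' p0' n with hs'
        have hstep : g.histPlay f1 f2 p0 (n + 1)
            = (s.1 ++ [s.2], if g.turn1 s.2 then f1 s.1 s.2 else f2 s.1 s.2) := rfl
        have hstep' : g'.histPlay f1'' f2' p0' (n + 1)
            = (s'.1 ++ [s'.2], if g'.turn1 s'.2 then f1'' s'.1 s'.2 else f2' s'.1 s'.2) := rfl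
        rw [hstep, hstep']
        have hrcs : ∀ x, rc2 (s.1 ++ [s.2]) x = st2 s' s.2 x := by
          intro x
          rw [hrc2def, reconG_snoc]
          rw [show reconG st2 ([], p0') s.1 s.2 = s' from hrc]
        by_cases ht : g.turn1 s.2
        · have ht' : g'.turn1 s'.2 := (hturn _ _ hR).1 ht
          have hnext : (g.histPlay f1 f2 p0 (n + 1)).2 = f1 s.1 s.2 := by
            rw [hstep]
            exact if_pos ht
          have hp' : f1'' s'.1 s'.2 = F3f s.2 s'.2 (f1 s.1 s.2) := by
            simp only [hf1''def, hlen', ← hs, hnext]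
          refine ⟨by simp [hlen], by simp [hlen'], ?_, ?_⟩
          · rw [if_pos ht, hrcs, hst2]
            simp only
            rw [if_pos ht', if_pos ht', hp']
          · simp only
            rw [if_pos ht, if_pos ht', hp']
            exact hF3r _ _ _ hR ht (hf1 _ _)
        · have ht' : ¬ g'.turn1 s'.2 := fun c => ht ((hturn _ _ hR).2 c)
          have hp2 : f2 s.1 s.2 = F4f s.2 s'.2 (f2' s'.1 s'.2) := by
            simp only [hf2def, hrc]
          refine ⟨by simp [hlen], by simp [hlen'], ?_, ?_⟩
          · rw [if_neg ht, hrcs, hst2]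
            simp only
            rw [if_neg ht', if_neg ht']
          · simp only
            rw [if_neg ht, if_neg ht', hp2]
            exact hF4r _ _ _ hR ht (hf2' _ _)
    intro htgt
    exact hw f1'' hf1''L n (htar _ _ (key n).2.2.2 htgt)
end SimAux

namespace OGAux

variable {V ι : Type*}

/-- The coupling relation between positions of the two optional-grabbing games. -/
def Rel (G : PawnGame V ι) : GPos V ι → GPos V ι → Prop
  | .conf u Q, .conf u' Q' => u' = u ∧ Q' ⊆ Q ∧ (G.owner u ∈ Q ↔ G.owner u ∈ Q')
  | .mid a w Q, .mid a' w' Q' =>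
      a' = a ∧ w' = w ∧ Q' ⊆ Q ∧ (G.owner w ∈ Q ↔ G.owner w ∈ Q')
  | _, _ => False

lemma rel_turn (G : PawnGame V ι) :
    ∀ p p', Rel G p p' → (G.OG.turn1 p ↔ G.OG.turn1 p') := by
  rintro (⟨u, Q⟩ | ⟨a, w, Q⟩) (⟨u', Q'⟩ | ⟨a', w', Q'⟩) hR <;>
    simp only [Rel] at hR
  · obtain ⟨rfl, hsub, hiff⟩ := hR
    exact hiff
  · obtain ⟨rfl, rfl, hsub, hiff⟩ := hR
    exact not_congr hiff

lemma rel_tar (G : PawnGame V ι) :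
    ∀ p p', Rel G p p' → G.OG.target p → G.OG.target p' := by
  rintro (⟨u, Q⟩ | ⟨a, w, Q⟩) (⟨u', Q'⟩ | ⟨a', w', Q'⟩) hR ht <;>
    simp only [Rel] at hR
  · obtain ⟨rfl, -, -⟩ := hR
    exact ht
  · exact ht.elim

lemma rel_fwd (G : PawnGame V ι) :
    ∀ p p' q, Rel G p p' → G.OG.turn1 p → G.OG.move p q →
      ∃ q', G.OG.move p' q' ∧ Rel G q q' := by
  intro p p' q hR ht hm
  cases hm with
  | @step w u Q hE =>
    obtain ⟨u', Q'⟩ | ⟨a', w', Q'⟩ := p'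
    · obtain ⟨rfl, hsub, hiff⟩ := hR
      exact ⟨.mid u u' Q', .step hE, rfl, rfl, hsub, hiff⟩
    · exact absurd hR id
  | @noGrab u w Q =>
    obtain ⟨u', Q'⟩ | ⟨a', w', Q'⟩ := p'
    · exact absurd hR id
    · obtain ⟨rfl, rfl, hsub, hiff⟩ := hR
      have hwn : G.owner w' ∉ Q' := fun c => ht (hiff.mpr c)
      by_cases hc : G.owner a' ∈ Q ∧ G.owner a' ∉ Q'
      · refine ⟨.conf a' (insert (G.owner a') Q'), .grabBy1 hwn hc.2,
          rfl, Set.insert_subset hc.1 hsub, ?_⟩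
        simp [hc.1]
      · push_neg at hc
        exact ⟨.conf a' Q', .noGrab, rfl, hsub, ⟨fun h => hc h, fun h => hsub h⟩⟩
  | @grabBy2 u w Q j hw hj =>
    exact absurd hw ht
  | @grabBy1 u w Q j hw hj =>
    obtain ⟨u', Q'⟩ | ⟨a', w', Q'⟩ := p'
    · exact absurd hR id
    · obtain ⟨rfl, rfl, hsub, hiff⟩ := hR
      have hwn : G.owner w' ∉ Q' := fun c => hw (hiff.mpr c)
      have hsub' : Q' ⊆ insert j Q := hsub.trans (Set.subset_insert _ _)
      by_cases hc : G.owner a' ∈ insert j Q ∧ G.owner a' ∉ Q'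
      · refine ⟨.conf a' (insert (G.owner a') Q'), .grabBy1 hwn hc.2,
          rfl, Set.insert_subset hc.1 hsub', ?_⟩
        simp [hc.1]
      · push_neg at hc
        exact ⟨.conf a' Q', .noGrab, rfl, hsub', ⟨fun h => hc h, fun h => hsub' h⟩⟩

lemma rel_bwd (G : PawnGame V ι) :
    ∀ p p' q', Rel G p p' → ¬ G.OG.turn1 p → G.OG.move p' q' →
      ∃ q, G.OG.move p q ∧ Rel G q q' := by
  intro p p' q' hR ht hm
  cases hm with
  | @step w' u' Q' hE =>
    obtain ⟨u, Q⟩ | ⟨a, w, Q⟩ := p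
    · obtain ⟨rfl, hsub, hiff⟩ := hR
      exact ⟨.mid u' w' Q, .step hE, rfl, rfl, hsub, hiff⟩
    · exact absurd hR id
  | @noGrab u' w' Q' =>
    obtain ⟨u, Q⟩ | ⟨a, w, Q⟩ := p
    · exact absurd hR id
    · obtain ⟨rfl, rfl, hsub, hiff⟩ := hR
      have hwQ : G.owner w' ∈ Q := not_not.mp ht
      by_cases hc : G.owner u' ∈ Q ∧ G.owner u' ∉ Q'
      · refine ⟨.conf u' (Q \ {G.owner u'}), .grabBy2 hwQ hc.1, rfl,
          fun x hx => ⟨hsub hx, fun hh => hc.2 (hh ▸ hx)⟩, ?_⟩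
        simp [hc.2]
      · push_neg at hc
        exact ⟨.conf u' Q, .noGrab, rfl, hsub, ⟨fun h => hc h, fun h => hsub h⟩⟩
  | @grabBy2 u' w' Q' j hw' hj =>
    obtain ⟨u, Q⟩ | ⟨a, w, Q⟩ := p
    · exact absurd hR id
    · obtain ⟨rfl, rfl, hsub, hiff⟩ := hR
      have hwQ : G.owner w' ∈ Q := not_not.mp ht
      by_cases hc : G.owner u' ∈ Q ∧ G.owner u' ∉ Q' \ {j}
      · refine ⟨.conf u' (Q \ {G.owner u'}), .grabBy2 hwQ hc.1, rfl,
          fun x hx => ⟨hsub hx.1, fun hh => hc.2 (hh ▸ hx)⟩, ?_⟩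
        simp [hc.2]
      · push_neg at hc
        exact ⟨.conf u' Q, .noGrab, rfl, fun x hx => hsub hx.1,
          ⟨fun h => hc h, fun h => hsub h.1⟩⟩
  | @grabBy1 u' w' Q' j hw' hj =>
    obtain ⟨u, Q⟩ | ⟨a, w, Q⟩ := p
    · exact absurd hR id
    · obtain ⟨rfl, rfl, hsub, hiff⟩ := hR
      exact absurd (hiff.mp (not_not.mp ht)) hw'

end OGAux

/-- **Theorem 3.1**: in an MVPP optional-grabbing pawn game, for a configuration `⟨v,P⟩`,
the pawn `j` owning `v`, and `P' ⊆ P`: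
(i) if `j ∈ P` implies `j ∈ P'` and Player 1 wins from `⟨v,P⟩`, then Player 1 wins from `⟨v,P'⟩`;
(ii) if `j ∉ P'` implies `j ∉ P` and Player 2 wins from `⟨v,P'⟩`, then Player 2 wins from `⟨v,P⟩`. -/
theorem optional_grabbing_fewer_pawns_better {V : Type*} {d : ℕ}
    (G : PawnGame V (Fin d)) (v : V) (P P' : Set (Fin d)) (hsub : P' ⊆ P) :
    ((G.owner v ∈ P → G.owner v ∈ P') →
        G.OG.Win1 (.conf v P) → G.OG.Win1 (.conf v P')) ∧
    ((G.owner v ∉ P' → G.owner v ∉ P) →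
        G.OG.Win2 (.conf v P') → G.OG.Win2 (.conf v P)) := by
  constructor
  · intro h1 hwin
    refine (SimAux.sim_transfer G.OG G.OG (OGAux.Rel G) (.conf v P) (.conf v P')
      ⟨rfl, hsub, ⟨h1, fun hh => hsub hh⟩⟩ (OGAux.rel_tar G) (OGAux.rel_turn G)
      (OGAux.rel_fwd G) (OGAux.rel_bwd G)).1 hwin
  · intro h2 hwin
    have h1 : G.owner v ∈ P → G.owner v ∈ P' := fun hp => by_contra fun hn => h2 hn hp
    refine (SimAux.sim_transfer G.OG G.OG (OGAux.Rel G) (.conf v P) (.conf v P')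
      ⟨rfl, hsub, ⟨h1, fun hh => hsub hh⟩⟩ (OGAux.rel_tar G) (OGAux.rel_turn G)
      (OGAux.rel_fwd G) (OGAux.rel_bwd G)).2 hwin
end

section
/- In an MVPP optional-grabbing pawn game, suppose Player 1 controls the pawns P ⊆ {1,…,d} and Player 2 moves the token to a vertex v owned by pawn j, after which Player 1 has the option to grab. If Player 1 wins after grabbing some pawn j' ≠ j (i.e., wins from configuration ⟨v, P ∪ {j'}⟩), then Player 1 also wins by not grabbing at all (i.e., wins from ⟨v,P⟩). The dual statement holds for Player 2. -/
open scoped Classical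

namespace OGAux

variable {V : Type*} {d : ℕ}

/-- A default legal move. -/
noncomputable def dflt (G : PawnGame V (Fin d)) (p : GPos V (Fin d)) : GPos V (Fin d) :=
  (G.OG.total p).choose

lemma dflt_move (G : PawnGame V (Fin d)) (p : GPos V (Fin d)) :
    G.OG.move p (dflt G p) := (G.OG.total p).choose_spec

/-- The coupling relation: either the two positions are identical, or the second one is the
same position with one extra pawn `k` under Player 1's control, where `k` does not own the
relevant current vertex. -/
inductive Rel_s3 (G : PawnGame V (Fin d)) : GPos V (Fin d) → GPos V (Fin d) → Prop
  | sync (p) : Rel_s3 G p p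
  | confA (w : V) (Q : Set (Fin d)) (k : Fin d) (hk : k ∉ Q) (ho : k ≠ G.owner w) :
      Rel_s3 G (.conf w Q) (.conf w (insert k Q))
  | midA (u w : V) (Q : Set (Fin d)) (k : Fin d) (hk : k ∉ Q) (ho : k ≠ G.owner w) :
      Rel_s3 G (.mid u w Q) (.mid u w (insert k Q))

lemma turn_iff {G : PawnGame V (Fin d)} {s b : GPos V (Fin d)} (h : Rel_s3 G s b) :
    (G.OG.turn1 s ↔ G.OG.turn1 b) := by
  cases h with
  | sync p => rfl
  | confA w Q k hk ho =>
      show G.owner w ∈ Q ↔ G.owner w ∈ insert k Q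
      simp [Set.mem_insert_iff, (Ne.symm ho)]
  | midA u w Q k hk ho =>
      show G.owner w ∉ Q ↔ G.owner w ∉ insert k Q
      simp [Set.mem_insert_iff, (Ne.symm ho)]

lemma target_iff {G : PawnGame V (Fin d)} {s b : GPos V (Fin d)} (h : Rel_s3 G s b) :
    (G.OG.target s ↔ G.OG.target b) := by
  cases h <;> rfl

lemma insert_diff_eq {k : Fin d} {Q : Set (Fin d)} (hk : k ∉ Q) :
    (insert k Q \ Q) = {k} := by
  ext x
  simp only [Set.mem_diff, Set.mem_insert_iff, Set.mem_singleton_iff]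
  constructor
  · rintro ⟨h1 | h1, h2⟩
    · exact h1
    · exact absurd h1 h2
  · rintro rfl
    exact ⟨Or.inl rfl, hk⟩

lemma insert_ne {k : Fin d} {Q : Set (Fin d)} (hk : k ∉ Q) :
    insert k Q ≠ Q := fun h => hk (h ▸ Set.mem_insert k Q)

/-- Mirror a move made on the "big" side (the side with the extra pawn) to the small side.
This is used for Player 1's moves. -/
noncomputable def mirDown (G : PawnGame V (Fin d)) :
    GPos V (Fin d) → GPos V (Fin d) → GPos V (Fin d) → GPos V (Fin d)
  | .conf w Q, _, .mid u _ _ => .mid u w Q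
  | .mid _ w Q, .mid _ _ Q', .conf u' R =>
      if Q' = Q then .conf u' R
      else if h : (Q' \ Q).Nonempty then
        if G.owner u' = h.some then .conf u' Q' else .conf u' (R \ {h.some})
      else .conf u' R
  | _, _, p => p

/-- Mirror a move made on the "small" side to the big side.
This is used for Player 2's moves. -/
noncomputable def mirUp (G : PawnGame V (Fin d)) :
    GPos V (Fin d) → GPos V (Fin d) → GPos V (Fin d) → GPos V (Fin d)
  | .conf _ _, .conf w' Q', .mid u _ _ => .mid u w' Q'
  | .mid _ _ Q, .mid _ _ Q', .conf u' R =>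
      if Q' = Q then .conf u' R
      else if h : (Q' \ Q).Nonempty then
        if G.owner u' = h.some then .conf u' (Q' \ {h.some}) else .conf u' (insert h.some R)
      else .conf u' R
  | _, _, p => p

end OGAux
namespace OGAux

variable {V : Type*} {d : ℕ}

lemma some_eq {k : Fin d} {Q : Set (Fin d)} (hk : k ∉ Q)
    (h : (insert k Q \ Q).Nonempty) : h.some = k := by
  rcases h.some_mem with ⟨h1 | h1, h2⟩
  · exact h1
  · exact absurd h1 h2

lemma step_down (G : PawnGame V (Fin d)) {s b b' : GPos V (Fin d)}
    (hR : Rel_s3 G s b) (ht : G.OG.turn1 b) (hm : G.OG.move b b') :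
    G.OG.move s (mirDown G s b b') ∧ Rel_s3 G (mirDown G s b b') b' := by
  have hm' : OGMove G b b' := hm
  cases hR with
  | sync p =>
      cases hm' with
      | step h =>
          exact ⟨OGMove.step h, Rel_s3.sync _⟩
      | noGrab =>
          simp only [mirDown, if_pos rfl]
          exact ⟨OGMove.noGrab, Rel_s3.sync _⟩
      | grabBy2 h1 h2 =>
          simp only [mirDown, if_pos rfl]
          exact ⟨OGMove.grabBy2 h1 h2, Rel_s3.sync _⟩
      | grabBy1 h1 h2 =>
          simp only [mirDown, if_pos rfl]
          exact ⟨OGMove.grabBy1 h1 h2, Rel_s3.sync _⟩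
  | confA w Q k hk ho =>
      cases hm' with
      | step h =>
          exact ⟨OGMove.step h, Rel_s3.midA _ _ _ _ hk ho⟩
  | midA u w Q k hk ho =>
      have how : G.owner w ∉ insert k Q := ht
      have howQ : G.owner w ∉ Q := fun h => how (Set.mem_insert_of_mem _ h)
      have hne := insert_ne hk
      have hX : ((insert k Q : Set (Fin d)) \ Q).Nonempty :=
        ⟨k, by rw [insert_diff_eq hk]; rfl⟩
      cases hm' with
      | noGrab =>
          simp only [mirDown, if_neg hne]
          rw [dif_pos hX, some_eq hk hX]
          by_cases hu : G.owner u = k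
          · rw [if_pos hu]
            exact ⟨OGMove.grabBy1 howQ hk, Rel_s3.sync _⟩
          · rw [if_neg hu, Set.insert_diff_self_of_notMem hk]
            exact ⟨OGMove.noGrab, Rel_s3.confA _ _ _ hk (fun h => hu h.symm)⟩
      | grabBy2 h1 h2 =>
          exact absurd h1 how
      | grabBy1 h1 h2 =>
          rename_i j
          have hjQ : j ∉ Q := fun h => h2 (Set.mem_insert_of_mem _ h)
          have hjk : j ≠ k := fun h => h2 (h ▸ Set.mem_insert k Q)
          have hkj : (k : Fin d) ∉ insert j Q := by
            simp only [Set.mem_insert_iff]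
            rintro (h | h)
            · exact hjk h.symm
            · exact hk h
          simp only [mirDown, if_neg hne]
          rw [dif_pos hX, some_eq hk hX]
          by_cases hu : G.owner u = k
          · rw [if_pos hu]
            refine ⟨OGMove.grabBy1 howQ hk, Rel_s3.confA _ _ _ h2 ?_⟩
            rw [hu]; exact hjk
          · rw [if_neg hu, Set.insert_comm, Set.insert_diff_self_of_notMem hkj]
            exact ⟨OGMove.grabBy1 howQ hjQ, Rel_s3.confA _ _ _ hkj (fun h => hu h.symm)⟩

lemma step_up (G : PawnGame V (Fin d)) {s b s' : GPos V (Fin d)}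
    (hR : Rel_s3 G s b) (ht : ¬ G.OG.turn1 s) (hm : G.OG.move s s') :
    G.OG.move b (mirUp G s b s') ∧ Rel_s3 G s' (mirUp G s b s') := by
  have hm' : OGMove G s s' := hm
  cases hR with
  | sync p =>
      cases hm' with
      | step h =>
          exact ⟨OGMove.step h, Rel_s3.sync _⟩
      | noGrab =>
          simp only [mirUp, if_pos rfl]
          exact ⟨OGMove.noGrab, Rel_s3.sync _⟩
      | grabBy2 h1 h2 =>
          simp only [mirUp, if_pos rfl]
          exact ⟨OGMove.grabBy2 h1 h2, Rel_s3.sync _⟩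
      | grabBy1 h1 h2 =>
          simp only [mirUp, if_pos rfl]
          exact ⟨OGMove.grabBy1 h1 h2, Rel_s3.sync _⟩
  | confA w Q k hk ho =>
      cases hm' with
      | step h =>
          exact ⟨OGMove.step h, Rel_s3.midA _ _ _ _ hk ho⟩
  | midA u w Q k hk ho =>
      have how : G.owner w ∈ Q := not_not.mp ht
      have how' : G.owner w ∈ insert k Q := Set.mem_insert_of_mem _ how
      have hne := insert_ne hk
      have hX : ((insert k Q : Set (Fin d)) \ Q).Nonempty :=
        ⟨k, by rw [insert_diff_eq hk]; rfl⟩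
      cases hm' with
      | noGrab =>
          simp only [mirUp, if_neg hne]
          rw [dif_pos hX, some_eq hk hX]
          by_cases hu : G.owner u = k
          · rw [if_pos hu]
            have hmv : OGMove G (.mid u w (insert k Q)) (.conf u (insert k Q \ {k})) :=
              OGMove.grabBy2 how' (Set.mem_insert k Q)
            rw [Set.insert_diff_self_of_notMem hk] at hmv
            have hrel : Rel_s3 G (.conf u Q) (.conf u (insert k Q \ {k})) := by
              rw [Set.insert_diff_self_of_notMem hk]; exact Rel_s3.sync _
            rw [Set.insert_diff_self_of_notMem hk] at hrel ⊢
            exact ⟨hmv, Rel_s3.sync _⟩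
          · rw [if_neg hu]
            exact ⟨OGMove.noGrab, Rel_s3.confA _ _ _ hk (fun h => hu h.symm)⟩
      | grabBy2 h1 h2 =>
          rename_i j
          have hjk : j ≠ k := fun h => hk (h ▸ h2)
          simp only [mirUp, if_neg hne]
          rw [dif_pos hX, some_eq hk hX]
          by_cases hu : G.owner u = k
          · rw [if_pos hu, Set.insert_diff_self_of_notMem hk]
            have hmv : OGMove G (.mid u w (insert k Q)) (.conf u (insert k Q \ {k})) :=
              OGMove.grabBy2 how' (Set.mem_insert k Q)
            rw [Set.insert_diff_self_of_notMem hk] at hmv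
            have hQ : insert j (Q \ {j}) = Q := by
              rw [Set.insert_diff_singleton, Set.insert_eq_self.mpr h2]
            have hrel := Rel_s3.confA (G := G) u (Q \ {j}) j (by simp) (by rw [hu]; exact hjk)
            rw [hQ] at hrel
            exact ⟨hmv, hrel⟩
          · rw [if_neg hu]
            have hQ : insert k (Q \ {j}) = insert k Q \ {j} :=
              Set.insert_diff_singleton_comm (fun h => hjk h.symm) Q
            have hmv : OGMove G (.mid u w (insert k Q)) (.conf u (insert k Q \ {j})) :=
              OGMove.grabBy2 how' (Set.mem_insert_of_mem _ h2)
            rw [← hQ] at hmv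
            exact ⟨hmv, Rel_s3.confA _ _ _ (by simp [hk]) (fun h => hu h.symm)⟩
      | grabBy1 h1 h2 =>
          exact absurd how h1

end OGAux
namespace OGAux

variable {V : Type*} {d : ℕ}

lemma histLen {Pos : Type*} (g : TB Pos) (f1 f2 : Strat Pos) (p0 : Pos) (n : ℕ) :
    (g.histPlay f1 f2 p0 n).1.length = n := by
  induction n with
  | zero => rfl
  | succ n ih => simp [TB.histPlay, ih]

/-- Translate a history of the small game into the corresponding history of the big game.
The first argument is the **reversed** small history. Player 1's moves in the big game are
given by `f1`; Player 2's moves are mirrored up from the small game. -/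
noncomputable def go1 (G : PawnGame V (Fin d)) (f1 : Strat (GPos V (Fin d)))
    (b0 : GPos V (Fin d)) :
    List (GPos V (Fin d)) → GPos V (Fin d) → List (GPos V (Fin d)) × GPos V (Fin d)
  | [], _ => ([], b0)
  | p :: t, r =>
      let Hb := go1 G f1 b0 t p
      (Hb.1 ++ [Hb.2], if G.OG.turn1 Hb.2 then f1 Hb.1 Hb.2 else mirUp G p Hb.2 r)

/-- Player 1's strategy in the small game obtained from a strategy `f1` in the big game. -/
noncomputable def f1s (G : PawnGame V (Fin d)) (f1 : Strat (GPos V (Fin d)))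
    (b0 : GPos V (Fin d)) : Strat (GPos V (Fin d)) := fun h r =>
  let Hb := go1 G f1 b0 h.reverse r
  let m := mirDown G r Hb.2 (f1 Hb.1 Hb.2)
  if G.OG.move r m then m else dflt G r

/-- Player 2's strategy in the big game obtained by mirroring Player 2's actual moves in
the small game (which is played with `f1s G f1 b0` against `f2`). -/
noncomputable def f2b (G : PawnGame V (Fin d)) (f1 : Strat (GPos V (Fin d)))
    (b0 s0 : GPos V (Fin d)) (f2 : Strat (GPos V (Fin d))) : Strat (GPos V (Fin d)) :=
  fun H b =>
    let r := G.OG.play (f1s G f1 b0) f2 s0 H.length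
    let r' := G.OG.play (f1s G f1 b0) f2 s0 (H.length + 1)
    let m := mirUp G r b r'
    if G.OG.move b m then m else dflt G b

lemma f1s_legal (G : PawnGame V (Fin d)) (f1 : Strat (GPos V (Fin d)))
    (b0 : GPos V (Fin d)) : G.OG.Legal (f1s G f1 b0) := by
  intro h p
  simp only [f1s]
  split
  · assumption
  · exact dflt_move G p

lemma f2b_legal (G : PawnGame V (Fin d)) (f1 : Strat (GPos V (Fin d)))
    (b0 s0 : GPos V (Fin d)) (f2 : Strat (GPos V (Fin d))) :
    G.OG.Legal (f2b G f1 b0 s0 f2) := by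
  intro h p
  simp only [f2b]
  split
  · assumption
  · exact dflt_move G p

lemma sim1 (G : PawnGame V (Fin d)) (f1 f2 : Strat (GPos V (Fin d)))
    (hf1 : G.OG.Legal f1) (hf2 : G.OG.Legal f2) {s0 b0 : GPos V (Fin d)}
    (hR0 : Rel_s3 G s0 b0) (n : ℕ) :
    go1 G f1 b0 ((G.OG.histPlay (f1s G f1 b0) f2 s0 n).1).reverse
        ((G.OG.histPlay (f1s G f1 b0) f2 s0 n).2)
      = G.OG.histPlay f1 (f2b G f1 b0 s0 f2) b0 n
    ∧ Rel_s3 G ((G.OG.histPlay (f1s G f1 b0) f2 s0 n).2)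
        ((G.OG.histPlay f1 (f2b G f1 b0 s0 f2) b0 n).2) := by
  induction n with
  | zero =>
      exact ⟨rfl, hR0⟩
  | succ n ih =>
      obtain ⟨ihEq, ihR⟩ := ih
      set A := G.OG.histPlay (f1s G f1 b0) f2 s0 n with hA
      set B := G.OG.histPlay f1 (f2b G f1 b0 s0 f2) b0 n with hB
      have hAs : G.OG.histPlay (f1s G f1 b0) f2 s0 (n + 1)
          = (A.1 ++ [A.2], if G.OG.turn1 A.2 then f1s G f1 b0 A.1 A.2 else f2 A.1 A.2) := rfl
      have hBs : G.OG.histPlay f1 (f2b G f1 b0 s0 f2) b0 (n + 1)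
          = (B.1 ++ [B.2], if G.OG.turn1 B.2 then f1 B.1 B.2
              else f2b G f1 b0 s0 f2 B.1 B.2) := rfl
      by_cases ht : G.OG.turn1 A.2
      · -- Player 1's turn
        have htB : G.OG.turn1 B.2 := (turn_iff ihR).mp ht
        obtain ⟨hmv, hRel⟩ := step_down G ihR htB (hf1 B.1 B.2)
        have hsmall : f1s G f1 b0 A.1 A.2 = mirDown G A.2 B.2 (f1 B.1 B.2) := by
          simp only [f1s]
          rw [ihEq]
          exact if_pos hmv
        rw [hAs, hBs, if_pos ht, if_pos htB, hsmall]
        constructor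
        · show go1 G f1 b0 ((A.1 ++ [A.2]).reverse) _ = _
          rw [List.reverse_append, List.reverse_singleton, List.singleton_append]
          show (let Hb := go1 G f1 b0 A.1.reverse A.2
            (Hb.1 ++ [Hb.2], if G.OG.turn1 Hb.2 then f1 Hb.1 Hb.2
              else mirUp G A.2 Hb.2 _)) = _
          rw [ihEq]
          simp only [if_pos htB]
        · exact hRel
      · -- Player 2's turn
        have htB : ¬ G.OG.turn1 B.2 := fun h => ht ((turn_iff ihR).mpr h)
        obtain ⟨hmv, hRel⟩ := step_up G ihR ht (hf2 A.1 A.2)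
        have hlen : A.1.length = n := histLen _ _ _ _ n
        have hplay1 : G.OG.play (f1s G f1 b0) f2 s0 n = A.2 := rfl
        have hplay2 : G.OG.play (f1s G f1 b0) f2 s0 (n + 1) = f2 A.1 A.2 := by
          show (G.OG.histPlay (f1s G f1 b0) f2 s0 (n + 1)).2 = _
          rw [hAs]
          exact if_neg ht
        have hBlen : B.1.length = n := histLen _ _ _ _ n
        have hbig : f2b G f1 b0 s0 f2 B.1 B.2 = mirUp G A.2 B.2 (f2 A.1 A.2) := by
          simp only [f2b, hBlen, hplay1, hplay2]
          exact if_pos hmv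
        rw [hAs, hBs, if_neg ht, if_neg htB, hbig]
        constructor
        · show go1 G f1 b0 ((A.1 ++ [A.2]).reverse) _ = _
          rw [List.reverse_append, List.reverse_singleton, List.singleton_append]
          show (let Hb := go1 G f1 b0 A.1.reverse A.2
            (Hb.1 ++ [Hb.2], if G.OG.turn1 Hb.2 then f1 Hb.1 Hb.2
              else mirUp G A.2 Hb.2 (f2 A.1 A.2))) = _
          rw [ihEq]
          simp only [if_neg htB]
        · exact hRel

lemma win1_transfer (G : PawnGame V (Fin d)) {s0 b0 : GPos V (Fin d)}
    (hR : Rel_s3 G s0 b0) (h : G.OG.Win1 b0) : G.OG.Win1 s0 := by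
  obtain ⟨f1, hf1, hwin⟩ := h
  refine ⟨f1s G f1 b0, f1s_legal G f1 b0, ?_⟩
  intro f2 hf2
  obtain ⟨n, hn⟩ := hwin (f2b G f1 b0 s0 f2) (f2b_legal G f1 b0 s0 f2)
  exact ⟨n, (target_iff (sim1 G f1 f2 hf1 hf2 hR n).2).mpr hn⟩

end OGAux
namespace OGAux

variable {V : Type*} {d : ℕ}

/-- Translate a history of the big game into the corresponding history of the small game.
The first argument is the **reversed** big history. Player 2's moves in the small game are
given by `f2`; Player 1's moves are mirrored down from the big game. -/
noncomputable def go2 (G : PawnGame V (Fin d)) (f2 : Strat (GPos V (Fin d)))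
    (s0 : GPos V (Fin d)) :
    List (GPos V (Fin d)) → GPos V (Fin d) → List (GPos V (Fin d)) × GPos V (Fin d)
  | [], _ => ([], s0)
  | p :: t, b =>
      let Hs := go2 G f2 s0 t p
      (Hs.1 ++ [Hs.2], if G.OG.turn1 Hs.2 then mirDown G Hs.2 p b else f2 Hs.1 Hs.2)

/-- Player 2's strategy in the big game obtained from a strategy `f2` in the small game. -/
noncomputable def f2big (G : PawnGame V (Fin d)) (f2 : Strat (GPos V (Fin d)))
    (s0 : GPos V (Fin d)) : Strat (GPos V (Fin d)) := fun H b =>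
  let Hs := go2 G f2 s0 H.reverse b
  let m := mirUp G Hs.2 b (f2 Hs.1 Hs.2)
  if G.OG.move b m then m else dflt G b

/-- Player 1's strategy in the small game obtained by mirroring Player 1's actual moves in
the big game (which is played with `f1` against `f2big G f2 s0`). -/
noncomputable def f1small (G : PawnGame V (Fin d)) (f2 : Strat (GPos V (Fin d)))
    (s0 b0 : GPos V (Fin d)) (f1 : Strat (GPos V (Fin d))) : Strat (GPos V (Fin d)) :=
  fun Hs s =>
    let b := G.OG.play f1 (f2big G f2 s0) b0 Hs.length
    let b' := G.OG.play f1 (f2big G f2 s0) b0 (Hs.length + 1)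
    let m := mirDown G s b b'
    if G.OG.move s m then m else dflt G s

lemma f2big_legal (G : PawnGame V (Fin d)) (f2 : Strat (GPos V (Fin d)))
    (s0 : GPos V (Fin d)) : G.OG.Legal (f2big G f2 s0) := by
  intro h p
  simp only [f2big]
  split
  · assumption
  · exact dflt_move G p

lemma f1small_legal (G : PawnGame V (Fin d)) (f2 : Strat (GPos V (Fin d)))
    (s0 b0 : GPos V (Fin d)) (f1 : Strat (GPos V (Fin d))) :
    G.OG.Legal (f1small G f2 s0 b0 f1) := by
  intro h p
  simp only [f1small]
  split
  · assumption
  · exact dflt_move G p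

lemma sim2 (G : PawnGame V (Fin d)) (f2 f1 : Strat (GPos V (Fin d)))
    (hf2 : G.OG.Legal f2) (hf1 : G.OG.Legal f1) {s0 b0 : GPos V (Fin d)}
    (hR0 : Rel_s3 G s0 b0) (n : ℕ) :
    go2 G f2 s0 ((G.OG.histPlay f1 (f2big G f2 s0) b0 n).1).reverse
        ((G.OG.histPlay f1 (f2big G f2 s0) b0 n).2)
      = G.OG.histPlay (f1small G f2 s0 b0 f1) f2 s0 n
    ∧ Rel_s3 G ((G.OG.histPlay (f1small G f2 s0 b0 f1) f2 s0 n).2)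
        ((G.OG.histPlay f1 (f2big G f2 s0) b0 n).2) := by
  induction n with
  | zero =>
      exact ⟨rfl, hR0⟩
  | succ n ih =>
      obtain ⟨ihEq, ihR⟩ := ih
      set A := G.OG.histPlay (f1small G f2 s0 b0 f1) f2 s0 n with hA
      set B := G.OG.histPlay f1 (f2big G f2 s0) b0 n with hB
      have hAs : G.OG.histPlay (f1small G f2 s0 b0 f1) f2 s0 (n + 1)
          = (A.1 ++ [A.2], if G.OG.turn1 A.2 then f1small G f2 s0 b0 f1 A.1 A.2
              else f2 A.1 A.2) := rfl
      have hBs : G.OG.histPlay f1 (f2big G f2 s0) b0 (n + 1)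
          = (B.1 ++ [B.2], if G.OG.turn1 B.2 then f1 B.1 B.2
              else f2big G f2 s0 B.1 B.2) := rfl
      by_cases ht : G.OG.turn1 A.2
      · -- Player 1's turn: Player 1 moves in the big game, mirror it down.
        have htB : G.OG.turn1 B.2 := (turn_iff ihR).mp ht
        obtain ⟨hmv, hRel⟩ := step_down G ihR htB (hf1 B.1 B.2)
        have hlen : A.1.length = n := histLen _ _ _ _ n
        have hplay1 : G.OG.play f1 (f2big G f2 s0) b0 n = B.2 := rfl
        have hplay2 : G.OG.play f1 (f2big G f2 s0) b0 (n + 1) = f1 B.1 B.2 := by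
          show (G.OG.histPlay f1 (f2big G f2 s0) b0 (n + 1)).2 = _
          rw [hBs]
          exact if_pos htB
        have hsmall : f1small G f2 s0 b0 f1 A.1 A.2 = mirDown G A.2 B.2 (f1 B.1 B.2) := by
          simp only [f1small, hlen, hplay1, hplay2]
          exact if_pos hmv
        rw [hAs, hBs, if_pos ht, if_pos htB, hsmall]
        constructor
        · show go2 G f2 s0 ((B.1 ++ [B.2]).reverse) _ = _
          rw [List.reverse_append, List.reverse_singleton, List.singleton_append]
          show (let Hs := go2 G f2 s0 B.1.reverse B.2
            (Hs.1 ++ [Hs.2], if G.OG.turn1 Hs.2 then mirDown G Hs.2 B.2 (f1 B.1 B.2)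
              else f2 Hs.1 Hs.2)) = _
          rw [ihEq]
          simp only [if_pos ht]
        · exact hRel
      · -- Player 2's turn: Player 2 moves in the small game, mirror it up.
        have htB : ¬ G.OG.turn1 B.2 := fun h => ht ((turn_iff ihR).mpr h)
        obtain ⟨hmv, hRel⟩ := step_up G ihR ht (hf2 A.1 A.2)
        have hbig : f2big G f2 s0 B.1 B.2 = mirUp G A.2 B.2 (f2 A.1 A.2) := by
          simp only [f2big]
          rw [ihEq]
          exact if_pos hmv
        rw [hAs, hBs, if_neg ht, if_neg htB, hbig]
        constructor
        · show go2 G f2 s0 ((B.1 ++ [B.2]).reverse) _ = _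
          rw [List.reverse_append, List.reverse_singleton, List.singleton_append]
          show (let Hs := go2 G f2 s0 B.1.reverse B.2
            (Hs.1 ++ [Hs.2], if G.OG.turn1 Hs.2 then mirDown G Hs.2 B.2 _
              else f2 Hs.1 Hs.2)) = _
          rw [ihEq]
          simp only [if_neg ht]
        · exact hRel

lemma win2_transfer (G : PawnGame V (Fin d)) {s0 b0 : GPos V (Fin d)}
    (hR : Rel_s3 G s0 b0) (h : G.OG.Win2 s0) : G.OG.Win2 b0 := by
  obtain ⟨f2, hf2, hwin⟩ := h
  refine ⟨f2big G f2 s0, f2big_legal G f2 s0, ?_⟩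
  intro f1 hf1 n hn
  exact hwin (f1small G f2 s0 b0 f1) (f1small_legal G f2 s0 b0 f1) n
    ((target_iff (sim2 G f2 f1 hf2 hf1 hR n).2).mpr hn)

end OGAux
/-- **Corollary 3.2** (locally-grabbing strategies suffice): in an MVPP optional-grabbing
pawn game, suppose the token has just been moved to a vertex `v` owned by pawn `j` and the
player who did not move has the option to grab. If Player 1 can win after grabbing a pawn
`j' ≠ j` (i.e. from `⟨v, P ∪ {j'}⟩`), then he also wins by not grabbing at all (i.e. from
`⟨v, P⟩`); dually, if Player 2 can win after grabbing `j' ≠ j` (i.e. from `⟨v, P \ {j'}⟩`),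
then she also wins by not grabbing at all. -/
theorem optional_grabbing_locally_grabbing {V : Type*} {d : ℕ}
    (G : PawnGame V (Fin d)) (v : V) (P : Set (Fin d)) (j' : Fin d)
    (hne : j' ≠ G.owner v) :
    (G.OG.Win1 (.conf v (insert j' P)) → G.OG.Win1 (.conf v P)) ∧
    (G.OG.Win2 (.conf v (P \ {j'})) → G.OG.Win2 (.conf v P)) := by
  constructor
  · intro h1
    refine OGAux.win1_transfer G ?_ h1
    by_cases hj : j' ∈ P
    · rw [Set.insert_eq_self.mpr hj]
      exact OGAux.Rel_s3.sync _
    · exact OGAux.Rel_s3.confA v P j' hj hne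
  · intro h2
    refine OGAux.win2_transfer G ?_ h2
    by_cases hj : j' ∈ P
    · have hP : insert j' (P \ {j'}) = P := by
        rw [Set.insert_diff_singleton, Set.insert_eq_self.mpr hj]
      have hrel := OGAux.Rel_s3.confA (G := G) v (P \ {j'}) j' (by simp) hne
      rwa [hP] at hrel
    · rw [Set.diff_singleton_eq_self hj]
      exact OGAux.Rel_s3.sync _
end

section
/- Let ⟨V,E,T⟩ be an OVPP optional-grabbing pawn game with initial configuration ⟨v₀,P₀⟩ (identifying each pawn with the unique vertex it owns, so P₀ ⊆ V). Define an increasing sequence of sets starting with W₀ = T as follows: at each stage with current set W, (1) if some u ∉ W has N(u) ⊆ W, add {u : N(u) ⊆ W}; otherwise let B = {u ∉ W : N(u) ∩ W ≠ ∅} and B' = {u ∈ B : N(u) ⊆ B ∪ W}; (2) if B' ≠ ∅, add B'; (3) otherwise let R = {u : N(u) ⊆ B} and, if R ∖ P₀ ≠ ∅, add R ∖ P₀; if none of (1)–(3) applies (in particular if B = ∅), stop. Let W* be the final set and B* = {u ∉ W* : N(u) ∩ W* ≠ ∅}. Then Player 1 wins from ⟨v₀,P₀⟩ if and only if v₀ ∈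 W*, or v₀ ∈ B* and v₀ ∈ P₀. -/
open scoped Classical

/-- One iteration of Algorithm 1 for OVPP optional-grabbing games: given the current set `W`,
(1) add `{u : N(u) ⊆ W}` if it contains a new vertex; otherwise, with
`B = {u ∉ W : N(u) ∩ W ≠ ∅}` and `B' = {u ∈ B : N(u) ⊆ B ∪ W}`,
(2) add `B'` if it is nonempty; (3) otherwise, with `R = {u : N(u) ⊆ B}`, add `R \ P₀`
if it is nonempty; and otherwise stop (return `W` unchanged). -/
noncomputable def ovppStep {V : Type*} (G : PawnGame V V) (P0 : Set V) (W : Set V) : Set V :=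
  if ∃ u, u ∉ W ∧ ∀ x, G.E u x → x ∈ W then
    W ∪ {u | ∀ x, G.E u x → x ∈ W}
  else
    let B : Set V := {u | u ∉ W ∧ ∃ x, G.E u x ∧ x ∈ W}
    let B' : Set V := {u | u ∈ B ∧ ∀ x, G.E u x → x ∈ B ∪ W}
    if B'.Nonempty then W ∪ B'
    else
      let R : Set V := {u | ∀ x, G.E u x → x ∈ B}
      if (R \ P0).Nonempty then W ∪ (R \ P0) else W

/-- The final set `W*` computed by Algorithm 1: since each non-final iteration adds at least
one vertex, the fixed point is reached after at most `|V|` iterations. -/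
noncomputable def ovppWstar {V : Type*} [Fintype V] (G : PawnGame V V) (P0 : Set V) : Set V :=
  (ovppStep G P0)^[Fintype.card V] {w | G.target w}

namespace OGAux

variable {V : Type*} [Fintype V]

noncomputable def Wseq (G : PawnGame V V) (P0 : Set V) (i : ℕ) : Set V :=
  (ovppStep G P0)^[i] {w | G.target w}

lemma Wseq_succ (G : PawnGame V V) (P0 : Set V) (i : ℕ) :
    Wseq G P0 (i + 1) = ovppStep G P0 (Wseq G P0 i) :=
  Function.iterate_succ_apply' _ _ _

lemma Wstar_eq (G : PawnGame V V) (P0 : Set V) :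
    ovppWstar G P0 = Wseq G P0 (Fintype.card V) := rfl

lemma ovppStep_def (G : PawnGame V V) (P0 W : Set V) :
    ovppStep G P0 W =
      if ∃ u, u ∉ W ∧ ∀ x, G.E u x → x ∈ W then W ∪ {u | ∀ x, G.E u x → x ∈ W}
      else if {u | (u ∉ W ∧ ∃ x, G.E u x ∧ x ∈ W) ∧
          ∀ x, G.E u x → x ∈ {u | u ∉ W ∧ ∃ x, G.E u x ∧ x ∈ W} ∪ W}.Nonempty
        then W ∪ {u | (u ∉ W ∧ ∃ x, G.E u x ∧ x ∈ W) ∧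
          ∀ x, G.E u x → x ∈ {u | u ∉ W ∧ ∃ x, G.E u x ∧ x ∈ W} ∪ W}
      else if ({u | ∀ x, G.E u x → x ∈ {u | u ∉ W ∧ ∃ x, G.E u x ∧ x ∈ W}} \ P0).Nonempty
        then W ∪ ({u | ∀ x, G.E u x → x ∈ {u | u ∉ W ∧ ∃ x, G.E u x ∧ x ∈ W}} \ P0)
      else W := by
  unfold ovppStep
  congr

lemma subset_ovppStep (G : PawnGame V V) (P0 W : Set V) : W ⊆ ovppStep G P0 W := by
  rw [ovppStep_def]
  split_ifs <;> first | exact Set.subset_union_left | exact subset_rfl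

lemma Wseq_mono (G : PawnGame V V) (P0 : Set V) : Monotone (Wseq G P0) := by
  apply monotone_nat_of_le_succ
  intro i
  rw [Wseq_succ]
  exact subset_ovppStep G P0 _

lemma Wseq_stab (G : PawnGame V V) (P0 : Set V) {i : ℕ}
    (h : Wseq G P0 (i + 1) = Wseq G P0 i) :
    ∀ j, i ≤ j → Wseq G P0 j = Wseq G P0 i := by
  intro j hj
  obtain ⟨k, rfl⟩ := Nat.exists_eq_add_of_le hj
  induction k with
  | zero => rfl
  | succ k ih =>
    have : Wseq G P0 (i + (k + 1)) = ovppStep G P0 (Wseq G P0 (i + k)) := Wseq_succ _ _ _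
    rw [this, ih (Nat.le_add_right _ _), ← Wseq_succ, h]

lemma exists_Wseq_fix (G : PawnGame V V) (P0 : Set V) :
    ∃ i ≤ Fintype.card V, Wseq G P0 (i + 1) = Wseq G P0 i := by
  by_contra hc
  push_neg at hc
  have key : ∀ i, i ≤ Fintype.card V + 1 → i ≤ (Wseq G P0 i).ncard := by
    intro i hi
    induction i with
    | zero => exact Nat.zero_le _
    | succ k ih =>
      have hk : k ≤ Fintype.card V := by omega
      have hsub : Wseq G P0 k ⊆ Wseq G P0 (k + 1) := Wseq_mono G P0 (Nat.le_succ k)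
      have h1 : (Wseq G P0 k).ncard < (Wseq G P0 (k + 1)).ncard :=
        Set.ncard_lt_ncard (hsub.ssubset_of_ne (hc k hk).symm) (Set.toFinite _)
      have := ih (by omega)
      omega
  have h2 := key (Fintype.card V + 1) le_rfl
  have h3 : (Wseq G P0 (Fintype.card V + 1)).ncard ≤ Fintype.card V := by
    have := Set.ncard_le_ncard (Set.subset_univ (Wseq G P0 (Fintype.card V + 1)))
      Set.finite_univ
    simpa [Set.ncard_univ] using this
  omega

lemma ovppStep_Wstar (G : PawnGame V V) (P0 : Set V) :
    ovppStep G P0 (ovppWstar G P0) = ovppWstar G P0 := by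
  obtain ⟨i, hi, hfix⟩ := exists_Wseq_fix G P0
  have hstab := Wseq_stab G P0 hfix
  rw [Wstar_eq, ← Wseq_succ, hstab (Fintype.card V + 1) (by omega), hstab (Fintype.card V) hi]

lemma Wseq_subset_Wstar (G : PawnGame V V) (P0 : Set V) (j : ℕ) :
    Wseq G P0 j ⊆ ovppWstar G P0 := by
  rcases le_or_gt j (Fintype.card V) with h | h
  · exact Wseq_mono G P0 h
  · obtain ⟨i, hi, hfix⟩ := exists_Wseq_fix G P0
    have hstab := Wseq_stab G P0 hfix
    have : Wseq G P0 j = ovppWstar G P0 := by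
      rw [hstab j (by omega), Wstar_eq, hstab (Fintype.card V) hi]
    exact this.le

lemma target_subset_Wstar (G : PawnGame V V) (P0 : Set V) :
    {w | G.target w} ⊆ ovppWstar G P0 :=
  Wseq_subset_Wstar G P0 0

end OGAux
namespace OGAux

variable {V : Type*} [Fintype V]

/-- No vertex outside `W*` has all successors in `W*`. -/
lemma fixA (G : PawnGame V V) (P0 : Set V) :
    ∀ u, u ∉ ovppWstar G P0 → ∃ x, G.E u x ∧ x ∉ ovppWstar G P0 := by
  intro u hu
  by_contra hcon
  push_neg at hcon
  have h1 : ∃ w, w ∉ ovppWstar G P0 ∧ ∀ x, G.E w x → x ∈ ovppWstar G P0 := ⟨u, hu, hcon⟩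
  have h2 : u ∈ ovppStep G P0 (ovppWstar G P0) := by
    rw [ovppStep_def, if_pos h1]
    exact Set.mem_union_right _ hcon
  rw [ovppStep_Wstar] at h2
  exact hu h2

lemma fixB (G : PawnGame V V) (P0 : Set V) :
    ∀ u, u ∉ ovppWstar G P0 → (∃ x, G.E u x ∧ x ∈ ovppWstar G P0) →
      ∃ x, G.E u x ∧ x ∉ ovppWstar G P0 ∧ ∀ y, G.E x y → y ∉ ovppWstar G P0 := by
  intro u hu hex
  by_contra hcon
  push_neg at hcon
  have hc1 : ¬ ∃ w, w ∉ ovppWstar G P0 ∧ ∀ x, G.E w x → x ∈ ovppWstar G P0 := by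
    rintro ⟨w, hw, hwall⟩
    obtain ⟨x, hx, hxn⟩ := fixA G P0 w hw
    exact hxn (hwall x hx)
  have hmem : u ∈ {w | (w ∉ ovppWstar G P0 ∧ ∃ x, G.E w x ∧ x ∈ ovppWstar G P0) ∧
      ∀ x, G.E w x → x ∈ {z | z ∉ ovppWstar G P0 ∧ ∃ y, G.E z y ∧ y ∈ ovppWstar G P0}
        ∪ ovppWstar G P0} := by
    refine ⟨⟨hu, hex⟩, fun x hx => ?_⟩
    by_cases hxW : x ∈ ovppWstar G P0
    · exact Or.inr hxW
    · exact Or.inl ⟨hxW, hcon x hx hxW⟩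
  have h2 : u ∈ ovppStep G P0 (ovppWstar G P0) := by
    rw [ovppStep_def, if_neg hc1, if_pos ⟨u, hmem⟩]
    exact Set.mem_union_right _ hmem
  rw [ovppStep_Wstar] at h2
  exact hu h2

lemma fixC (G : PawnGame V V) (P0 : Set V) :
    ∀ u, u ∉ P0 → u ∉ ovppWstar G P0 →
      ∃ x, G.E u x ∧ (x ∈ ovppWstar G P0 ∨ ∀ y, G.E x y → y ∉ ovppWstar G P0) := by
  intro u hP hW
  by_contra hcon
  push_neg at hcon
  -- every successor of u is in the border B*
  have hR : ∀ x, G.E u x →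
      x ∈ {z | z ∉ ovppWstar G P0 ∧ ∃ y, G.E z y ∧ y ∈ ovppWstar G P0} := by
    intro x hx
    exact hcon x hx
  have hc1 : ¬ ∃ w, w ∉ ovppWstar G P0 ∧ ∀ x, G.E w x → x ∈ ovppWstar G P0 := by
    rintro ⟨w, hw, hwall⟩
    obtain ⟨x, hx, hxn⟩ := fixA G P0 w hw
    exact hxn (hwall x hx)
  have hc2 : ¬ ({w | (w ∉ ovppWstar G P0 ∧ ∃ x, G.E w x ∧ x ∈ ovppWstar G P0) ∧
      ∀ x, G.E w x → x ∈ {z | z ∉ ovppWstar G P0 ∧ ∃ y, G.E z y ∧ y ∈ ovppWstar G P0}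
        ∪ ovppWstar G P0}).Nonempty := by
    rintro ⟨w, ⟨hw1, hw2⟩⟩
    obtain ⟨x, hx, hx1, hx2⟩ := fixB G P0 w hw1.1 hw1.2
    rcases hw2 x hx with hxB | hxW
    · obtain ⟨y, hy1, hy2⟩ := hxB.2
      exact hx2 y hy1 hy2
    · exact hx1 hxW
  have h2 : u ∈ ovppStep G P0 (ovppWstar G P0) := by
    rw [ovppStep_def, if_neg hc1, if_neg hc2, if_pos ⟨u, hR, hP⟩]
    exact Set.mem_union_right _ ⟨hR, hP⟩
  rw [ovppStep_Wstar] at h2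
  exact hW h2

/-- Case analysis for a vertex newly added by one step of the algorithm. -/
lemma mem_ovppStep_cases (G : PawnGame V V) (P0 : Set V) {W : Set V} {v : V}
    (h : v ∈ ovppStep G P0 W) (hv : v ∉ W) :
    (∀ x, G.E v x → x ∈ W) ∨
    ((v ∉ W ∧ ∃ x, G.E v x ∧ x ∈ W) ∧
      ∀ x, G.E v x → x ∈ W ∨ (x ∉ W ∧ ∃ y, G.E x y ∧ y ∈ W)) ∨
    (v ∉ P0 ∧ ∀ x, G.E v x → x ∉ W ∧ ∃ y, G.E x y ∧ y ∈ W) := by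
  rw [ovppStep_def] at h
  split_ifs at h with h1 h2 h3
  · rcases h with h | h
    · exact absurd h hv
    · exact Or.inl h
  · rcases h with h | h
    · exact absurd h hv
    · refine Or.inr (Or.inl ⟨h.1, fun x hx => ?_⟩)
      rcases h.2 x hx with hB | hW
      · exact Or.inr hB
      · exact Or.inl hW
  · rcases h with h | h
    · exact absurd h hv
    · exact Or.inr (Or.inr ⟨h.2, h.1⟩)
  · exact absurd h hv

/-- Rank of a vertex: the first stage at which it appears in the algorithm's set. -/
noncomputable def rk (G : PawnGame V V) (P0 : Set V) (x : V) : ℕ :=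
  if x ∈ ovppWstar G P0 then sInf {j | x ∈ Wseq G P0 j} else Fintype.card V + 1

lemma rk_mem (G : PawnGame V V) (P0 : Set V) {x : V} (hx : x ∈ ovppWstar G P0) :
    x ∈ Wseq G P0 (rk G P0 x) := by
  rw [rk, if_pos hx]
  have hne : Fintype.card V ∈ {j | x ∈ Wseq G P0 j} := hx
  exact Nat.sInf_mem ⟨_, hne⟩

lemma rk_le (G : PawnGame V V) (P0 : Set V) {x : V} {j : ℕ} (hx : x ∈ Wseq G P0 j) :
    rk G P0 x ≤ j := by
  rw [rk, if_pos (Wseq_subset_Wstar G P0 j hx)]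
  exact Nat.sInf_le hx

lemma exists_best (G : PawnGame V V) (P0 : Set V) (v : V) :
    ∃ x, G.E v x ∧ ∀ y, G.E v y → rk G P0 x ≤ rk G P0 y := by
  have hs : (rk G P0 '' {y | G.E v y}).Nonempty := by
    obtain ⟨x0, hx0⟩ := G.total v
    exact ⟨_, ⟨x0, hx0, rfl⟩⟩
  obtain ⟨x, hx, hxe⟩ := Nat.sInf_mem hs
  exact ⟨x, hx, fun y hy => hxe ▸ Nat.sInf_le ⟨y, hy, rfl⟩⟩

/-- A successor of `v` of minimal rank. -/
noncomputable def best (G : PawnGame V V) (P0 : Set V) (v : V) : V :=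
  Classical.choose (exists_best G P0 v)

lemma best_edge (G : PawnGame V V) (P0 : Set V) (v : V) : G.E v (best G P0 v) :=
  (Classical.choose_spec (exists_best G P0 v)).1

lemma best_mem (G : PawnGame V V) (P0 : Set V) {v : V} {j : ℕ}
    (h : ∃ x, G.E v x ∧ x ∈ Wseq G P0 j) : best G P0 v ∈ Wseq G P0 j := by
  obtain ⟨x, hx, hxW⟩ := h
  have h1 : rk G P0 (best G P0 v) ≤ rk G P0 x :=
    (Classical.choose_spec (exists_best G P0 v)).2 x hx
  have h2 : rk G P0 x ≤ j := rk_le G P0 hxW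
  have hbW : best G P0 v ∈ ovppWstar G P0 := by
    by_contra hb
    have : rk G P0 (best G P0 v) = Fintype.card V + 1 := by rw [rk, if_neg hb]
    have hxc : rk G P0 x ≤ Fintype.card V :=
      rk_le G P0 (Wseq_subset_Wstar G P0 j hxW)
    omega
  exact Wseq_mono G P0 (le_trans h1 h2) (rk_mem G P0 hbW)

/-- Vertices that are border vertices at some stage of the algorithm. -/
def Bor (G : PawnGame V V) (P0 : Set V) : Set V :=
  {u | ∃ j, u ∉ Wseq G P0 j ∧ ∃ x, G.E u x ∧ x ∈ Wseq G P0 j}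

end OGAux
namespace OGAux

variable {V : Type*} [Fintype V]

/-- Player 1's positional strategy: from a configuration move to a minimal-rank successor;
at an intermediate position (after Player 2 moved the token to `x`) grab `x` when `x` is a
border vertex of some stage. -/
noncomputable def sigma (G : PawnGame V V) (P0 : Set V) : GPos V V → GPos V V
  | .conf v Q => .mid (best G P0 v) v Q
  | .mid x v Q =>
      if v ∉ Q ∧ x ∉ Q ∧ x ∈ Bor G P0 then .conf x (insert x Q) else .conf x Q

noncomputable def sig1 (G : PawnGame V V) (P0 : Set V) : Strat (GPos V V) :=
  fun _ p => sigma G P0 p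

lemma sig1_legal (G : PawnGame V V) (hovpp : G.owner = id) (P0 : Set V) :
    G.OG.Legal (sig1 G P0) := by
  intro h p
  show OGMove G p (sigma G P0 p)
  cases p with
  | conf v Q => exact OGMove.step (best_edge G P0 v)
  | mid x v Q =>
    rw [sigma]
    split_ifs with hc
    · refine OGMove.grabBy1 ?_ hc.2.1
      rw [hovpp]
      exact hc.1
    · exact OGMove.noGrab

lemma play_succ_eq {Pos : Type*} (g : TB Pos) (f1 f2 : Strat Pos) (p0 : Pos) (n : ℕ) :
    g.play f1 f2 p0 (n + 1) =
      if g.turn1 (g.play f1 f2 p0 n) then f1 (g.histPlay f1 f2 p0 n).1 (g.play f1 f2 p0 n)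
      else f2 (g.histPlay f1 f2 p0 n).1 (g.play f1 f2 p0 n) := rfl

lemma play_zero {Pos : Type*} (g : TB Pos) (f1 f2 : Strat Pos) (p0 : Pos) :
    g.play f1 f2 p0 0 = p0 := rfl

lemma turn1_conf (G : PawnGame V V) (hovpp : G.owner = id) (v : V) (Q : Set V) :
    G.OG.turn1 (.conf v Q) ↔ v ∈ Q := by
  show G.owner v ∈ Q ↔ v ∈ Q
  rw [hovpp]
  rfl

lemma turn1_mid (G : PawnGame V V) (hovpp : G.owner = id) (x v : V) (Q : Set V) :
    G.OG.turn1 (.mid x v Q) ↔ v ∉ Q := by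
  show G.owner v ∉ Q ↔ v ∉ Q
  rw [hovpp]
  rfl

/-- After Player 1 moves at a configuration he controls, two steps later the token is on
`best v` and Player 1's pawn set has not grown. -/
lemma step_p1 (G : PawnGame V V) (hovpp : G.owner = id) (P0 : Set V)
    (f2 : Strat (GPos V V)) (hf2 : G.OG.Legal f2) (p0 : GPos V V) (n : ℕ) (v : V) (Q : Set V)
    (hn : G.OG.play (sig1 G P0) f2 p0 n = .conf v Q) (hQ : v ∈ Q) :
    ∃ Q', Q' ⊆ Q ∧ G.OG.play (sig1 G P0) f2 p0 (n + 2) = .conf (best G P0 v) Q' := by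
  have ht1 : G.OG.turn1 (G.OG.play (sig1 G P0) f2 p0 n) := by
    rw [hn]
    exact (turn1_conf G hovpp v Q).mpr hQ
  have e1 : G.OG.play (sig1 G P0) f2 p0 (n + 1) = .mid (best G P0 v) v Q := by
    rw [play_succ_eq, if_pos ht1, hn]
    rfl
  have ht2 : ¬ G.OG.turn1 (G.OG.play (sig1 G P0) f2 p0 (n + 1)) := by
    rw [e1]
    intro hcon
    exact (turn1_mid G hovpp _ v Q).mp hcon hQ
  have e2 : OGMove G (G.OG.play (sig1 G P0) f2 p0 (n + 1))
      (G.OG.play (sig1 G P0) f2 p0 (n + 2)) := by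
    rw [play_succ_eq (g := G.OG) (n := n + 1), if_neg ht2]
    exact hf2 _ _
  rw [e1] at e2
  generalize hp : G.OG.play (sig1 G P0) f2 p0 (n + 2) = p at e2
  cases e2 with
  | noGrab => first
    | exact ⟨Q, subset_rfl, hp⟩
    | exact ⟨Q, subset_rfl, rfl⟩
  | grabBy2 h1 h2 => first
    | exact ⟨_, Set.diff_subset, hp⟩
    | exact ⟨_, Set.diff_subset, rfl⟩
  | grabBy1 h1 h2 =>
    rw [hovpp] at h1
    exact absurd hQ h1

/-- After Player 2 moves at a configuration Player 1 does not control, two steps later the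
token is on a successor `u`; Player 1 grabbed `u` if `u` is a border vertex. -/
lemma step_p2 (G : PawnGame V V) (hovpp : G.owner = id) (P0 : Set V)
    (f2 : Strat (GPos V V)) (hf2 : G.OG.Legal f2) (p0 : GPos V V) (n : ℕ) (v : V) (Q : Set V)
    (hn : G.OG.play (sig1 G P0) f2 p0 n = .conf v Q) (hQ : v ∉ Q) :
    ∃ u Q', G.E v u ∧ G.OG.play (sig1 G P0) f2 p0 (n + 2) = .conf u Q' ∧ Q ⊆ Q' ∧
      Q' ⊆ Q ∪ ({u} ∩ Bor G P0) ∧ (u ∈ Bor G P0 → u ∈ Q') := by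
  have ht1 : ¬ G.OG.turn1 (G.OG.play (sig1 G P0) f2 p0 n) := by
    rw [hn]
    intro hcon
    exact hQ ((turn1_conf G hovpp v Q).mp hcon)
  have e1 : OGMove G (G.OG.play (sig1 G P0) f2 p0 n)
      (G.OG.play (sig1 G P0) f2 p0 (n + 1)) := by
    rw [play_succ_eq, if_neg ht1]
    exact hf2 _ _
  rw [hn] at e1
  generalize hp : G.OG.play (sig1 G P0) f2 p0 (n + 1) = p at e1
  cases e1 with
  | step hE =>
    rename_i u
    have ht2 : G.OG.turn1 (G.OG.play (sig1 G P0) f2 p0 (n + 1)) := by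
      rw [hp]
      exact (turn1_mid G hovpp u v Q).mpr hQ
    have e2 : G.OG.play (sig1 G P0) f2 p0 (n + 2) = sigma G P0 (.mid u v Q) := by
      rw [play_succ_eq (g := G.OG) (n := n + 1), if_pos ht2, hp]
      rfl
    rw [sigma] at e2
    by_cases hc : v ∉ Q ∧ u ∉ Q ∧ u ∈ Bor G P0
    · rw [if_pos hc] at e2
      refine ⟨u, insert u Q, hE, e2, Set.subset_insert _ _, ?_, fun _ => Set.mem_insert _ _⟩
      intro w hw
      rcases Set.mem_insert_iff.mp hw with rfl | hw
      · exact Or.inr ⟨rfl, hc.2.2⟩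
      · exact Or.inl hw
    · rw [if_neg hc] at e2
      refine ⟨u, Q, hE, e2, subset_rfl, Set.subset_union_left, ?_⟩
      intro hB
      by_contra huQ
      exact hc ⟨hQ, huQ, hB⟩

end OGAux
namespace OGAux

variable {V : Type*} [Fintype V]

lemma target_conf (G : PawnGame V V) (v : V) (Q : Set V) :
    G.OG.target (.conf v Q) ↔ G.target v := Iff.rfl

/-- Main induction for Player 1: if the play reaches a configuration whose vertex is in
stage `i` of the algorithm and Player 1 controls only initial pawns and border pawns,
then the play reaches the target. -/
lemma p1_main (G : PawnGame V V) (hovpp : G.owner = id) (P0 : Set V)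
    (f2 : Strat (GPos V V)) (hf2 : G.OG.Legal f2) (p0 : GPos V V) :
    ∀ i n v Q, G.OG.play (sig1 G P0) f2 p0 n = .conf v Q → v ∈ Wseq G P0 i →
      Q ⊆ P0 ∪ Bor G P0 → ∃ m, G.OG.target (G.OG.play (sig1 G P0) f2 p0 m) := by
  intro i
  induction i using Nat.strong_induction_on with
  | _ i IH =>
  intro n v Q hn hv hQsub
  cases i with
  | zero =>
    refine ⟨n, ?_⟩
    rw [hn]
    exact hv
  | succ i =>
    by_cases hvi : v ∈ Wseq G P0 i
    · exact IH i (Nat.lt_succ_self i) n v Q hn hvi hQsub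
    have hv1 : v ∈ Wseq G P0 (i + 1) := hv
    rw [Wseq_succ] at hv
    rcases mem_ovppStep_cases G P0 hv hvi with hcase | hcase | hcase
    · -- rule (1): all successors of v are in W_i
      by_cases hvQ : v ∈ Q
      · obtain ⟨Q', hQ'sub, h2⟩ := step_p1 G hovpp P0 f2 hf2 p0 n v Q hn hvQ
        have hb : best G P0 v ∈ Wseq G P0 i := by
          obtain ⟨x, hx⟩ := G.total v
          exact best_mem G P0 ⟨x, hx, hcase x hx⟩
        exact IH i (Nat.lt_succ_self i) (n + 2) _ Q' h2 hb (hQ'sub.trans hQsub)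
      · obtain ⟨u, Q', hE, h2, hQQ', hsub2, hBor⟩ := step_p2 G hovpp P0 f2 hf2 p0 n v Q hn hvQ
        refine IH i (Nat.lt_succ_self i) (n + 2) u Q' h2 (hcase u hE) ?_
        intro w hw
        rcases hsub2 hw with hw | hw
        · exact hQsub hw
        · exact Or.inr hw.2
    · -- rule (2): v is in B', the closed border
      by_cases hvQ : v ∈ Q
      · obtain ⟨Q', hQ'sub, h2⟩ := step_p1 G hovpp P0 f2 hf2 p0 n v Q hn hvQ
        have hb : best G P0 v ∈ Wseq G P0 i := best_mem G P0 hcase.1.2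
        exact IH i (Nat.lt_succ_self i) (n + 2) _ Q' h2 hb (hQ'sub.trans hQsub)
      · obtain ⟨u, Q', hE, h2, hQQ', hsub2, hBor⟩ := step_p2 G hovpp P0 f2 hf2 p0 n v Q hn hvQ
        have hinv' : Q' ⊆ P0 ∪ Bor G P0 := by
          intro w hw
          rcases hsub2 hw with hw | hw
          · exact hQsub hw
          · exact Or.inr hw.2
        rcases hcase.2 u hE with huW | huB
        · exact IH i (Nat.lt_succ_self i) (n + 2) u Q' h2 huW hinv'
        · have huBor : u ∈ Bor G P0 := ⟨i, huB.1, huB.2⟩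
          have huQ' : u ∈ Q' := hBor huBor
          obtain ⟨Q'', hQ''sub, h4⟩ := step_p1 G hovpp P0 f2 hf2 p0 (n + 2) u Q' h2 huQ'
          have hb : best G P0 u ∈ Wseq G P0 i := best_mem G P0 huB.2
          exact IH i (Nat.lt_succ_self i) (n + 2 + 2) _ Q'' h4 hb (hQ''sub.trans hinv')
    · -- rule (3): v ∉ P0 and all successors of v are stage-i border vertices
      have hvQ : v ∉ Q := by
        intro hvQ
        rcases hQsub hvQ with hP | hB
        · exact hcase.1 hP
        · obtain ⟨j, hj1, x, hx, hxj⟩ := hB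
          rcases le_or_gt j i with hji | hji
          · exact (hcase.2 x hx).1 (Wseq_mono G P0 hji hxj)
          · exact hj1 (Wseq_mono G P0 hji hv1)
      obtain ⟨u, Q', hE, h2, hQQ', hsub2, hBor⟩ := step_p2 G hovpp P0 f2 hf2 p0 n v Q hn hvQ
      have huB := hcase.2 u hE
      have hinv' : Q' ⊆ P0 ∪ Bor G P0 := by
        intro w hw
        rcases hsub2 hw with hw | hw
        · exact hQsub hw
        · exact Or.inr hw.2
      have huBor : u ∈ Bor G P0 := ⟨i, huB.1, huB.2⟩
      have huQ' : u ∈ Q' := hBor huBor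
      obtain ⟨Q'', hQ''sub, h4⟩ := step_p1 G hovpp P0 f2 hf2 p0 (n + 2) u Q' h2 huQ'
      have hb : best G P0 u ∈ Wseq G P0 i := best_mem G P0 huB.2
      exact IH i (Nat.lt_succ_self i) (n + 2 + 2) _ Q'' h4 hb (hQ''sub.trans hinv')

/-- Soundness: the algorithm's answer implies Player 1 wins. -/
lemma win1_of (G : PawnGame V V) (hovpp : G.owner = id) (v0 : V) (P0 : Set V)
    (hmain : v0 ∈ ovppWstar G P0 ∨
      (v0 ∉ ovppWstar G P0 ∧ (∃ x, G.E v0 x ∧ x ∈ ovppWstar G P0) ∧ v0 ∈ P0)) :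
    G.OG.Win1 (.conf v0 P0) := by
  refine ⟨sig1 G P0, sig1_legal G hovpp P0, ?_⟩
  intro f2 hf2
  rcases hmain with hv | ⟨hv, hb, hP⟩
  · exact p1_main G hovpp P0 f2 hf2 _ (Fintype.card V) 0 v0 P0 rfl hv
      Set.subset_union_left
  · obtain ⟨Q', hQ'sub, h2⟩ :=
      step_p1 G hovpp P0 f2 hf2 (.conf v0 P0) 0 v0 P0 rfl hP
    have hbW : best G P0 v0 ∈ Wseq G P0 (Fintype.card V) := best_mem G P0 hb
    exact p1_main G hovpp P0 f2 hf2 _ (Fintype.card V) 2 _ Q' h2 hbW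
      (hQ'sub.trans Set.subset_union_left)

end OGAux
namespace OGAux

variable {V : Type*} [Fintype V]

/-- The border of the final set `W*`. -/
def Bst (G : PawnGame V V) (P0 : Set V) : Set V :=
  {u | u ∉ ovppWstar G P0 ∧ ∃ x, G.E u x ∧ x ∈ ovppWstar G P0}

/-- Player 2's choice of successor: one outside `W*` and outside its border, if possible. -/
noncomputable def pick (G : PawnGame V V) (P0 : Set V) (u : V) : V :=
  if h : ∃ x, G.E u x ∧ x ∉ ovppWstar G P0 ∧ x ∉ Bst G P0 then Classical.choose h
  else Classical.choose (G.total u)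

lemma pick_edge (G : PawnGame V V) (P0 : Set V) (u : V) : G.E u (pick G P0 u) := by
  rw [pick]
  split_ifs with h
  · exact (Classical.choose_spec h).1
  · exact Classical.choose_spec (G.total u)

lemma pick_spec (G : PawnGame V V) (P0 : Set V) (u : V)
    (h : ∃ x, G.E u x ∧ x ∉ ovppWstar G P0 ∧ x ∉ Bst G P0) :
    pick G P0 u ∉ ovppWstar G P0 ∧ pick G P0 u ∉ Bst G P0 := by
  rw [pick, dif_pos h]
  exact (Classical.choose_spec h).2

/-- Player 2's positional strategy. -/
noncomputable def tau (G : PawnGame V V) (P0 : Set V) : GPos V V → GPos V V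
  | .conf u Q => .mid (pick G P0 u) u Q
  | .mid x u Q =>
      if u ∈ Q ∧ x ∈ Q ∧ x ∈ Bst G P0 then .conf x (Q \ {x}) else .conf x Q

noncomputable def tau2 (G : PawnGame V V) (P0 : Set V) : Strat (GPos V V) :=
  fun _ p => tau G P0 p

lemma tau2_legal (G : PawnGame V V) (hovpp : G.owner = id) (P0 : Set V) :
    G.OG.Legal (tau2 G P0) := by
  intro h p
  show OGMove G p (tau G P0 p)
  cases p with
  | conf u Q => exact OGMove.step (pick_edge G P0 u)
  | mid x u Q =>
    rw [tau]
    split_ifs with hc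
    · refine OGMove.grabBy2 ?_ hc.2.1
      rw [hovpp]
      exact hc.1
    · exact OGMove.noGrab

/-- Player 2's invariant along the play. -/
def Pinv (G : PawnGame V V) (P0 : Set V) : GPos V V → Prop
  | .conf u Q => u ∉ ovppWstar G P0 ∧ (u ∈ Bst G P0 → u ∉ Q) ∧ P0 \ Q ⊆ Bst G P0
  | .mid x u Q => x ∉ ovppWstar G P0 ∧ P0 \ Q ⊆ Bst G P0 ∧ (u ∉ Q → x ∉ Bst G P0)

lemma p2_inv (G : PawnGame V V) (hovpp : G.owner = id) (P0 : Set V)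
    (f1 : Strat (GPos V V)) (hf1 : G.OG.Legal f1) (p0 : GPos V V)
    (h0 : Pinv G P0 p0) :
    ∀ n, Pinv G P0 (G.OG.play f1 (tau2 G P0) p0 n) := by
  intro n
  induction n with
  | zero => exact h0
  | succ n ih =>
    cases hp : G.OG.play f1 (tau2 G P0) p0 n with
    | conf u Q =>
      rw [hp] at ih
      obtain ⟨h1, h2, h3⟩ := ih
      by_cases hQ : u ∈ Q
      · -- Player 1 moves the token
        have ht : G.OG.turn1 (G.OG.play f1 (tau2 G P0) p0 n) := by
          rw [hp]; exact (turn1_conf G hovpp u Q).mpr hQ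
        have e1 : OGMove G (G.OG.play f1 (tau2 G P0) p0 n)
            (G.OG.play f1 (tau2 G P0) p0 (n + 1)) := by
          rw [play_succ_eq, if_pos ht]; exact hf1 _ _
        rw [hp] at e1
        generalize hq : G.OG.play f1 (tau2 G P0) p0 (n + 1) = q at e1 ⊢
        cases e1 with
        | step hE =>
          rename_i x
          have hunb : u ∉ Bst G P0 := fun hb => h2 hb hQ
          have hx : x ∉ ovppWstar G P0 := by
            intro hxW
            exact hunb ⟨h1, x, hE, hxW⟩
          exact ⟨hx, h3, fun hc => absurd hQ hc⟩
      · -- Player 2 moves the token, using `pick`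
        have ht : ¬ G.OG.turn1 (G.OG.play f1 (tau2 G P0) p0 n) := by
          rw [hp]
          intro hc
          exact hQ ((turn1_conf G hovpp u Q).mp hc)
        have e1 : G.OG.play f1 (tau2 G P0) p0 (n + 1) = .mid (pick G P0 u) u Q := by
          rw [play_succ_eq, if_neg ht, hp]; rfl
        rw [e1]
        have hex : ∃ x, G.E u x ∧ x ∉ ovppWstar G P0 ∧ x ∉ Bst G P0 := by
          by_cases hub : u ∈ Bst G P0
          · obtain ⟨x, hx1, hx2, hx3⟩ := fixB G P0 u hub.1 hub.2
            refine ⟨x, hx1, hx2, ?_⟩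
            intro hxB
            obtain ⟨y, hy1, hy2⟩ := hxB.2
            exact hx3 y hy1 hy2
          · have huP : u ∉ P0 := by
              intro hP
              exact hub (h3 ⟨hP, hQ⟩)
            obtain ⟨x, hx1, hx2⟩ := fixC G P0 u huP h1
            rcases hx2 with hxW | hxn
            · exact absurd ⟨h1, x, hx1, hxW⟩ hub
            · refine ⟨x, hx1, ?_, ?_⟩
              · intro hxW
                exact hub ⟨h1, x, hx1, hxW⟩
              · intro hxB
                obtain ⟨y, hy1, hy2⟩ := hxB.2
                exact hxn y hy1 hy2
        obtain ⟨hp1, hp2⟩ := pick_spec G P0 u hex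
        exact ⟨hp1, h3, fun _ => hp2⟩
    | mid x u Q =>
      rw [hp] at ih
      obtain ⟨h1, h2, h3⟩ := ih
      by_cases hQ : u ∈ Q
      · -- Player 2 decides whether to grab
        have ht : ¬ G.OG.turn1 (G.OG.play f1 (tau2 G P0) p0 n) := by
          rw [hp]
          intro hc
          exact (turn1_mid G hovpp x u Q).mp hc hQ
        have e1 : G.OG.play f1 (tau2 G P0) p0 (n + 1) = tau G P0 (.mid x u Q) := by
          rw [play_succ_eq, if_neg ht, hp]; rfl
        rw [tau] at e1
        by_cases hc : u ∈ Q ∧ x ∈ Q ∧ x ∈ Bst G P0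
        · rw [if_pos hc] at e1
          rw [e1]
          refine ⟨h1, fun _ => ?_, ?_⟩
          · intro hmem
            exact hmem.2 rfl
          · intro w hw
            by_cases hwx : w = x
            · subst hwx; exact hc.2.2
            · exact h2 ⟨hw.1, fun hwQ => hw.2 ⟨hwQ, hwx⟩⟩
        · rw [if_neg hc] at e1
          rw [e1]
          refine ⟨h1, fun hxB => ?_, h2⟩
          intro hxQ
          exact hc ⟨hQ, hxQ, hxB⟩
      · -- Player 1 decides whether to grab
        have hxB : x ∉ Bst G P0 := h3 hQ
        have ht : G.OG.turn1 (G.OG.play f1 (tau2 G P0) p0 n) := by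
          rw [hp]; exact (turn1_mid G hovpp x u Q).mpr hQ
        have e1 : OGMove G (G.OG.play f1 (tau2 G P0) p0 n)
            (G.OG.play f1 (tau2 G P0) p0 (n + 1)) := by
          rw [play_succ_eq, if_pos ht]; exact hf1 _ _
        rw [hp] at e1
        generalize hq : G.OG.play f1 (tau2 G P0) p0 (n + 1) = q at e1 ⊢
        cases e1 with
        | noGrab => exact ⟨h1, fun hb => absurd hb hxB, h2⟩
        | grabBy2 ha hb =>
          rw [hovpp] at ha
          exact absurd ha hQ
        | grabBy1 ha hb =>
          refine ⟨h1, fun hxb => absurd hxb hxB, ?_⟩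
          intro w hw
          exact h2 ⟨hw.1, fun hwQ => hw.2 (Set.mem_insert_of_mem _ hwQ)⟩

/-- Completeness: if the algorithm says no, Player 2 wins. -/
lemma win2_of (G : PawnGame V V) (hovpp : G.owner = id) (v0 : V) (P0 : Set V)
    (h1 : v0 ∉ ovppWstar G P0) (h2 : v0 ∈ Bst G P0 → v0 ∉ P0) :
    G.OG.Win2 (.conf v0 P0) := by
  refine ⟨tau2 G P0, tau2_legal G hovpp P0, ?_⟩
  intro f1 hf1 n
  have h0 : Pinv G P0 (.conf v0 P0) := ⟨h1, fun hb hP => h2 hb hP, fun w hw => absurd hw.1 hw.2⟩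
  have hinv := p2_inv G hovpp P0 f1 hf1 _ h0 n
  cases hp : G.OG.play f1 (tau2 G P0) (.conf v0 P0) n with
  | conf u Q =>
    rw [hp] at hinv
    intro ht
    exact hinv.1 (target_subset_Wstar G P0 ht)
  | mid x u Q =>
    intro ht
    exact ht

end OGAux
namespace OGAux

lemma not_win1_of_win2 {Pos : Type*} (g : TB Pos) (p0 : Pos) (h2 : g.Win2 p0) :
    ¬ g.Win1 p0 := by
  rintro ⟨f1, hf1, H1⟩
  obtain ⟨f2, hf2, H2⟩ := h2
  obtain ⟨n, hn⟩ := H1 f2 hf2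
  exact H2 f1 hf1 n hn

end OGAux

/-- **Theorem 3.3** (correctness of Algorithm 1): in an OVPP optional-grabbing pawn game
(pawns are identified with the vertices they own, so `owner = id`), Player 1 wins from the
initial configuration `⟨v₀,P₀⟩` if and only if `v₀ ∈ W*`, or `v₀` is in the border
`B* = {u ∉ W* : N(u) ∩ W* ≠ ∅}` and `v₀ ∈ P₀`. -/
theorem ovpp_optional_grabbing_algorithm_correct {V : Type*} [Fintype V]
    (G : PawnGame V V) (hovpp : G.owner = id) (v0 : V) (P0 : Set V) :
    G.OG.Win1 (.conf v0 P0) ↔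
      v0 ∈ ovppWstar G P0 ∨
        (v0 ∉ ovppWstar G P0 ∧ (∃ x, G.E v0 x ∧ x ∈ ovppWstar G P0) ∧ v0 ∈ P0) := by
  constructor
  · intro hw
    by_contra hc
    push_neg at hc
    obtain ⟨hc1, hc2⟩ := hc
    refine OGAux.not_win1_of_win2 _ _ (OGAux.win2_of G hovpp v0 P0 hc1 ?_) hw
    intro hb
    exact hc2 hc1 hb.2
  · intro h
    exact OGAux.win1_of G hovpp v0 P0 h
end

section
/- Let G = ⟨V,E,T⟩ with V = V₁ ∪ V₂ be a finite turn-based reachability game, and construct the OVPP optional-grabbing pawn game G' = ⟨V',E',T ∪ {t}⟩ with V' = V ∪ {v' : v ∈ V} ∪ {s,t}, each vertex owned by a distinct pawn, and edges: (v',v) for every v ∈ V; (v,s) for every v ∈ V₁; (v,t) for every v ∈ V₂; and (u,v') for every edge (u,v) ∈ E; here t is a target and s is a sink with no path to a target. Let V'₁ = V₁ ∪ {v' : v ∈ V₂}. Then Player 1 wins G from a vertex v₀ ∈ V if and only if Player 1 wins the optional-grabbing game G' from configuration ⟨v₀, V'₁⟩. -/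
open scoped Classical

/-- Vertices of the OVPP optional-grabbing game built from a turn-based game:
the original vertices, a primed copy `prime v` of each vertex, a sink `s`
and a fresh target `t`. -/
inductive RVert (V : Type*) where
  | base (v : V)
  | prime (v : V)
  | sink
  | targ

/-- Edges of the constructed game: `v' → v` for every `v`; `v → s` for `v ∈ V₁`;
`v → t` for `v ∈ V₂`; `u → v'` for every original edge `(u,v)`; `s` and `t` are
absorbing so that every vertex has a successor. -/
def redE {V : Type*} (g : TB V) : RVert V → RVert V → Prop := fun x y =>
  match x, y with
  | .prime v, .base w => w = v
  | .base v, .sink => g.turn1 v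
  | .base v, .targ => ¬ g.turn1 v
  | .base v, .prime w => g.move v w
  | .sink, .sink => True
  | .targ, .targ => True
  | _, _ => False

/-- The OVPP optional-grabbing pawn game `G'` built from a turn-based game `g`:
each vertex is owned by a distinct pawn (identified with the vertex itself), and
the target set is `T ∪ {t}`. -/
def redGame {V : Type*} (g : TB V) : PawnGame (RVert V) (RVert V) where
  E := redE g
  total := by
    rintro (v | v | _ | _)
    · by_cases h : g.turn1 v
      · exact ⟨.sink, h⟩
      · exact ⟨.targ, h⟩
    · exact ⟨.base v, rfl⟩
    · exact ⟨.sink, trivial⟩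
    · exact ⟨.targ, trivial⟩
  owner := id
  target := fun x =>
    match x with
    | .base v => g.target v
    | .prime _ => False
    | .sink => False
    | .targ => True

/-- The initial set of pawns of Player 1: `V'₁ = V₁ ∪ {v' : v ∈ V₂}`. -/
def redP1 {V : Type*} (g : TB V) : Set (RVert V) :=
  {x | match x with
       | .base v => g.turn1 v
       | .prime v => ¬ g.turn1 v
       | .sink => False
       | .targ => False}

/-!
Both games are reachability games, and in a reachability game Player 1 wins exactly from the
attractor of the target; so it suffices to compare attractors. A move `u → v` of `g` is simulated
by `u → v'`, an optional grab, `v' → v` and another optional grab. Player 1 can keep `P ⊆ V'₁`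
and Player 2 can keep `V'₁ ⊆ P`, each grabbing a vertex `v` they own in `g` right after the
opponent has moved the token from `v'` to `v`. Against either of these strategies the pawn `v` is
controlled by the owner of `v` in `g` whenever the token reaches `v`, so the pawn game replays `g`,
and leaving it through `s` or `t` loses for the player who does so.
-/

/-- `h.headD p` is the position reached by the first move, whichever player made it. -/
def Strat.afterFirst {Pos : Type*} (first : Pos → Pos) (cont : Pos → Strat Pos) : Strat Pos
  | [], p => first p
  | _ :: h, p => cont (h.headD p) h p

namespace TB

variable {Pos : Type*} (g : TB Pos)

inductive Attractor : Pos → Prop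
  | of_target {p : Pos} : g.target p → Attractor p
  | of_turn1 {p q : Pos} : g.turn1 p → g.move p q → Attractor q → Attractor p
  | of_turn2 {p : Pos} : ¬ g.turn1 p → (∀ q, g.move p q → Attractor q) → Attractor p

def IsTrapAt (S : Set Pos) (p : Pos) : Prop :=
  ¬ g.target p ∧ (g.turn1 p → ∀ q, g.move p q → q ∈ S) ∧ (¬ g.turn1 p → ∃ q, g.move p q ∧ q ∈ S)

def IsTrap (S : Set Pos) : Prop := ∀ p ∈ S, g.IsTrapAt S p

theorem isTrap_compl_attractor : g.IsTrap {p | ¬ g.Attractor p} := by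
  intro p hp
  refine ⟨fun ht => hp (.of_target ht), fun h1 q hpq hq => hp (.of_turn1 h1 hpq hq), fun h2 => ?_⟩
  by_contra! h
  exact hp (.of_turn2 h2 fun q hpq => not_not.1 (h q hpq))

variable {g}

theorem Attractor.not_mem_of_isTrap {S : Set Pos} (hS : g.IsTrap S) {p : Pos}
    (hp : g.Attractor p) : p ∉ S := by
  induction hp with
  | of_target ht => exact fun hp => (hS _ hp).1 ht
  | of_turn1 h1 hpq _ ih => exact fun hp => ih ((hS _ hp).2.1 h1 _ hpq)
  | of_turn2 h2 _ ih =>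
    intro hp
    obtain ⟨q, hpq, hq⟩ := (hS _ hp).2.2 h2
    exact ih q hpq hq

theorem play_succ (f1 f2 : Strat Pos) (p0 : Pos) (n : ℕ) :
    g.play f1 f2 p0 (n + 1) =
      if g.turn1 (g.play f1 f2 p0 n) then f1 (g.histPlay f1 f2 p0 n).1 (g.play f1 f2 p0 n)
      else f2 (g.histPlay f1 f2 p0 n).1 (g.play f1 f2 p0 n) :=
  rfl

theorem histPlay_succ_eq_cons (f1 f2 : Strat Pos) (p0 : Pos) (n : ℕ) :
    g.histPlay f1 f2 p0 (n + 1) =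
      (p0 :: (g.histPlay (fun h => f1 (p0 :: h)) (fun h => f2 (p0 :: h)) (g.play f1 f2 p0 1) n).1,
        (g.histPlay (fun h => f1 (p0 :: h)) (fun h => f2 (p0 :: h)) (g.play f1 f2 p0 1) n).2) := by
  induction n with
  | zero => rfl
  | succ n ih =>
    rw [histPlay, ih]
    rfl

theorem headD_histPlay (f1 f2 : Strat Pos) (p0 : Pos) (n : ℕ) :
    (g.histPlay f1 f2 p0 n).1.headD (g.histPlay f1 f2 p0 n).2 = p0 := by
  induction n with
  | zero => rfl
  | succ n ih =>
    rw [histPlay]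
    rcases h : (g.histPlay f1 f2 p0 n).1 with _ | ⟨a, l⟩ <;> simp_all

theorem histPlay_congr_of_headD {f1 f1' : Strat Pos} (f2 : Strat Pos) {p0 : Pos}
    (hf : ∀ h p, h.headD p = p0 → f1 h p = f1' h p) (n : ℕ) :
    g.histPlay f1 f2 p0 n = g.histPlay f1' f2 p0 n := by
  induction n with
  | zero => rfl
  | succ n ih =>
    rw [histPlay, histPlay, ← ih, hf _ _ (g.headD_histPlay f1 f2 p0 n)]

theorem play_afterFirst_succ (first : Pos → Pos) (cont : Pos → Strat Pos) (f2 : Strat Pos)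
    (p0 : Pos) (n : ℕ) :
    g.play (Strat.afterFirst first cont) f2 p0 (n + 1) =
      g.play (cont (g.play (Strat.afterFirst first cont) f2 p0 1)) (fun h => f2 (p0 :: h))
        (g.play (Strat.afterFirst first cont) f2 p0 1) n := by
  set q := g.play (Strat.afterFirst first cont) f2 p0 1
  have hcont : ∀ h p, h.headD p = q → Strat.afterFirst first cont (p0 :: h) p = cont q h p := by
    intro h p hp
    rw [← hp]
    rfl
  rw [play, histPlay_succ_eq_cons, histPlay_congr_of_headD _ hcont]
  rfl

theorem legal_afterFirst {first : Pos → Pos} {cont : Pos → Strat Pos}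
    (hfirst : ∀ p, g.move p (first p)) (hcont : ∀ q, g.Legal (cont q)) :
    g.Legal (Strat.afterFirst first cont) := by
  rintro (_ | _) p
  exacts [hfirst p, hcont _ _ _]

variable (g) in
noncomputable def anyStrat : Strat Pos := fun _ p => (g.total p).choose

theorem legal_anyStrat : g.Legal g.anyStrat := fun _ p => (g.total p).choose_spec

theorem Attractor.win1 {p : Pos} (hp : g.Attractor p) : g.Win1 p := by
  induction hp with
  | of_target ht => exact ⟨g.anyStrat, legal_anyStrat, fun _ _ => ⟨0, ht⟩⟩
  | @of_turn1 p q h1 hpq _ ih =>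
    obtain ⟨f, hf, hwin⟩ := ih
    let first : Pos → Pos := fun x => if g.move x q then q else g.anyStrat [] x
    have hfirst : ∀ x, g.move x (first x) := fun x => by
      by_cases hx : g.move x q
      · simp [first, hx]
      · simpa [first, hx] using legal_anyStrat (g := g) [] x
    refine ⟨Strat.afterFirst first fun _ => f, legal_afterFirst hfirst fun _ => hf, ?_⟩
    intro f2 hf2
    have hq : g.play (Strat.afterFirst first fun _ => f) f2 p 1 = q := by
      simp [play, histPlay, h1, Strat.afterFirst, first, hpq]
    obtain ⟨n, hn⟩ := hwin _ fun h => hf2 (p :: h)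
    exact ⟨n + 1, by rwa [play_afterFirst_succ, hq]⟩
  | @of_turn2 p h2 _ ih =>
    choose f hf hwin using ih
    let cont : Pos → Strat Pos := fun q => if hq : g.move p q then f q hq else g.anyStrat
    have hcont : ∀ q, g.Legal (cont q) := fun q => by
      by_cases hq : g.move p q
      · simpa [cont, hq] using hf q hq
      · simpa [cont, hq] using legal_anyStrat
    refine ⟨Strat.afterFirst (g.anyStrat []) cont, legal_afterFirst (legal_anyStrat []) hcont, ?_⟩
    intro f2 hf2
    have hq : g.play (Strat.afterFirst (g.anyStrat []) cont) f2 p 1 = f2 [] p := by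
      simp [play, histPlay, h2]
    have hpq : g.move p (f2 [] p) := hf2 [] p
    obtain ⟨n, hn⟩ := hwin _ hpq _ fun h => hf2 (p :: h)
    refine ⟨n + 1, ?_⟩
    rwa [play_afterFirst_succ, hq, show cont (f2 [] p) = f _ hpq from dif_pos hpq]

variable (g) in
noncomputable def trapStrat (S : Set Pos) : Strat Pos := fun _ p =>
  if h : ∃ q, g.move p q ∧ q ∈ S then h.choose else g.anyStrat [] p

theorem legal_trapStrat (S : Set Pos) : g.Legal (g.trapStrat S) := by
  intro h p
  unfold trapStrat
  split_ifs with hS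
  exacts [hS.choose_spec.1, legal_anyStrat [] p]

theorem win2_of_isTrap {S : Set Pos} (hS : g.IsTrap S) {p : Pos} (hp : p ∈ S) : g.Win2 p := by
  refine ⟨g.trapStrat S, legal_trapStrat S, fun f1 hf1 n => ?_⟩
  have hmem : ∀ n, g.play f1 (g.trapStrat S) p n ∈ S := by
    intro n
    induction n with
    | zero => exact hp
    | succ n ih =>
      rw [play_succ]
      split_ifs with h1
      · exact (hS _ ih).2.1 h1 _ (hf1 _ _)
      · have hex := (hS _ ih).2.2 h1
        simp only [trapStrat, dif_pos hex]
        exact hex.choose_spec.2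
  exact (hS _ (hmem n)).1

theorem Win2.not_win1 {p : Pos} (h2 : g.Win2 p) : ¬ g.Win1 p := by
  obtain ⟨f2, hf2, hsafe⟩ := h2
  rintro ⟨f1, hf1, hwin⟩
  obtain ⟨n, hn⟩ := hwin f2 hf2
  exact hsafe f1 hf1 n hn

theorem win1_iff_attractor {p : Pos} : g.Win1 p ↔ g.Attractor p :=
  ⟨fun hw => by_contra fun hp => (win2_of_isTrap g.isTrap_compl_attractor hp).not_win1 hw,
    Attractor.win1⟩

end TB

section Reduction

variable {V : Type*} (g : TB V)

theorem eq_base_of_redE_prime {v : V} {x : RVert V} (h : redE g (.prime v) x) : x = .base v := by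
  cases x <;> first | exact congrArg _ h | exact h.elim

theorem eq_sink_of_redE_sink {x : RVert V} (h : redE g .sink x) : x = .sink := by
  cases x <;> first | rfl | exact h.elim

theorem redGame_attractor_conf_prime {w : V} {P : Set (RVert V)} (hP : P ⊆ redP1 g)
    (hbase : ∀ Q ⊆ redP1 g, (g.turn1 w → .base w ∈ Q) →
      (redGame g).OG.Attractor (.conf (.base w) Q)) :
    (redGame g).OG.Attractor (.conf (.prime w) P) := by
  by_cases hw : RVert.prime w ∈ P
  · have hnt : ¬ g.turn1 w := hP hw
    refine .of_turn1 (q := .mid (.base w) (.prime w) P) hw (.step rfl)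
      (.of_turn2 (not_not_intro hw) fun q hq => ?_)
    cases hq with
    | noGrab => exact hbase P hP (absurd · hnt)
    | grabBy2 => exact hbase _ (Set.sdiff_subset.trans hP) (absurd · hnt)
    | grabBy1 hno => exact absurd hw hno
  · refine .of_turn2 hw fun q hq => ?_
    cases hq with | step hE => ?_
    obtain rfl := eq_base_of_redE_prime g hE
    by_cases hgrab : g.turn1 w ∧ RVert.base w ∉ P
    · exact .of_turn1 hw (.grabBy1 hw hgrab.2)
        (hbase _ (Set.insert_subset hgrab.1 hP) fun _ => Set.mem_insert _ _)
    · exact .of_turn1 hw .noGrab (hbase P hP fun h => not_not.1 (hgrab ⟨h, ·⟩))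

theorem redGame_attractor_conf_base {v : V} (hv : g.Attractor v) :
    ∀ P ⊆ redP1 g, (g.turn1 v → .base v ∈ P) → (redGame g).OG.Attractor (.conf (.base v) P) := by
  induction hv with
  | of_target ht => exact fun _ _ _ => .of_target ht
  | of_turn1 h1 hvw _ ih =>
    intro P hP hv
    refine .of_turn1 (q := .mid (.prime _) (.base _) P) (hv h1) (.step hvw)
      (.of_turn2 (not_not_intro (hv h1)) fun q hq => ?_)
    cases hq with
    | noGrab => exact redGame_attractor_conf_prime g hP ih
    | grabBy2 => exact redGame_attractor_conf_prime g (Set.sdiff_subset.trans hP) ih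
    | grabBy1 hno => exact absurd (hv h1) hno
  | @of_turn2 v h2 _ ih =>
    intro P hP _
    have hv : RVert.base v ∉ P := fun h => h2 (hP h)
    refine .of_turn2 hv fun q hq => ?_
    cases hq with | @step _ u _ hE => ?_
    cases u with
    | base => exact hE.elim
    | prime w => exact .of_turn1 hv .noGrab (redGame_attractor_conf_prime g hP (ih w hE))
    | sink => exact absurd hE h2
    | targ => exact .of_turn1 hv .noGrab (.of_target trivial)

def SafeFor2 : GPos (RVert V) (RVert V) → Prop
  | .conf (.base v) P => ¬ g.Attractor v ∧ redP1 g ⊆ P ∧ (.base v ∈ P → g.turn1 v)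
  | .conf (.prime w) P => ¬ g.Attractor w ∧ redP1 g ⊆ P
  | .mid (.prime w) _ P => ¬ g.Attractor w ∧ redP1 g ⊆ P
  | .mid (.base w) x P => x = .prime w ∧ ¬ g.Attractor w ∧ redP1 g ⊆ P
  | .conf .sink _ => True
  | .mid .sink _ _ => True
  | .conf .targ _ => False
  | .mid .targ _ _ => False

theorem isTrapAt_conf_of_safeFor2 {x : RVert V} {P : Set (RVert V)}
    (hp : SafeFor2 g (.conf x P)) : (redGame g).OG.IsTrapAt {p | SafeFor2 g p} (.conf x P) := by
  rcases x with v | w | _ | _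
  · obtain ⟨hv, hM, hb⟩ := hp
    refine ⟨fun ht => hv (.of_target ht), fun h1 q hq => ?_, fun h2 => ?_⟩
    · have ht : g.turn1 v := hb h1
      cases hq with | @step _ u _ hE => ?_
      cases u with
      | base => exact hE.elim
      | prime w => exact ⟨fun hw => hv (.of_turn1 ht hE hw), hM⟩
      | sink => trivial
      | targ => exact absurd ht hE
    · have hnt : ¬ g.turn1 v := fun ht => h2 (hM ht)
      obtain ⟨w, hvw, hw⟩ := (g.isTrap_compl_attractor v hv).2.2 hnt
      exact ⟨.mid (.prime w) (.base v) P, .step hvw, hw, hM⟩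
  · obtain ⟨hw, hM⟩ := hp
    refine ⟨id, fun _ q hq => ?_, fun _ => ⟨.mid (.base w) (.prime w) P, .step rfl, rfl, hw, hM⟩⟩
    cases hq with | step hE => ?_
    obtain rfl := eq_base_of_redE_prime g hE
    exact ⟨rfl, hw, hM⟩
  · refine ⟨id, fun _ q hq => ?_, fun _ => ⟨.mid .sink .sink P, .step trivial, trivial⟩⟩
    cases hq with | step hE => ?_
    obtain rfl := eq_sink_of_redE_sink g hE
    trivial
  · exact hp.elim

theorem isTrapAt_mid_of_safeFor2 {u x : RVert V} {P : Set (RVert V)}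
    (hp : SafeFor2 g (.mid u x P)) : (redGame g).OG.IsTrapAt {p | SafeFor2 g p} (.mid u x P) := by
  rcases u with w | w | _ | _
  · obtain ⟨rfl, hw, hM⟩ := hp
    refine ⟨id, fun h1 q hq => ?_, fun h2 => ?_⟩
    · have ht : g.turn1 w := by_contra fun ht => h1 (hM ht)
      cases hq with
      | noGrab => exact ⟨hw, hM, fun _ => ht⟩
      | grabBy2 h => exact absurd h h1
      | grabBy1 => exact ⟨hw, hM.trans (Set.subset_insert _ _), fun _ => ht⟩
    · by_cases hgrab : RVert.base w ∈ P ∧ ¬ g.turn1 w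
      · refine ⟨.conf (.base w) (P \ {.base w}), .grabBy2 (not_not.1 h2) hgrab.1, hw, ?_,
          fun h => (h.2 rfl).elim⟩
        intro y hy
        refine ⟨hM hy, ?_⟩
        rintro rfl
        exact hgrab.2 hy
      · exact ⟨.conf (.base w) P, .noGrab, hw, hM, fun hb => by_contra (hgrab ⟨hb, ·⟩)⟩
  · obtain ⟨hw, hM⟩ := hp
    refine ⟨id, fun h1 q hq => ?_, fun _ => ⟨.conf (.prime w) P, .noGrab, hw, hM⟩⟩
    cases hq with
    | noGrab => exact ⟨hw, hM⟩
    | grabBy2 h => exact absurd h h1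
    | grabBy1 => exact ⟨hw, hM.trans (Set.subset_insert _ _)⟩
  · refine ⟨id, fun _ q hq => ?_, fun _ => ⟨.conf .sink P, .noGrab, trivial⟩⟩
    cases hq <;> trivial
  · exact hp.elim

theorem isTrap_safeFor2 : (redGame g).OG.IsTrap {p | SafeFor2 g p} := by
  rintro (⟨w, P⟩ | ⟨u, w, P⟩) hp
  exacts [isTrapAt_conf_of_safeFor2 g hp, isTrapAt_mid_of_safeFor2 g hp]

end Reduction

/-- **Lemma 4.2**: Player 1 wins the turn-based game `g` from a vertex `v₀` if and only if
Player 1 wins the constructed OVPP optional-grabbing pawn game from the configuration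
`⟨v₀, V'₁⟩`. -/
theorem turn_based_to_optional_grabbing {V : Type*} (g : TB V) (v0 : V) :
    g.Win1 v0 ↔ (redGame g).OG.Win1 (.conf (.base v0) (redP1 g)) := by
  rw [TB.win1_iff_attractor, TB.win1_iff_attractor]
  refine ⟨fun hv => redGame_attractor_conf_base g hv _ subset_rfl id, fun h => ?_⟩
  by_contra hv
  exact h.not_mem_of_isTrap (isTrap_safeFor2 g) ⟨hv, subset_rfl, id⟩
end

section
/- Consider a configuration ⟨v,P⟩ of an MVPP always-grabbing pawn game, let j be the pawn owning v, and let P' ⊆ P. (i) Assuming that j ∈ P implies j ∈ P', if Player 1 wins from ⟨v,P⟩ then Player 1 wins from ⟨v,P'⟩. (ii) Assuming that j ∉ P' implies j ∉ P, if Player 2 wins from ⟨v,P'⟩ then Player 2 wins from ⟨v,P⟩. -/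
open scoped Classical

/-- Moves of the always-grabbing mechanism: after Player i moves the token, Player 3−i
must grab exactly one pawn from Player i's control. -/
inductive AGMove {V ι : Type*} (G : PawnGame V ι) : GPos V ι → GPos V ι → Prop
  | step {w u : V} {P : Set ι} : G.E w u → AGMove G (.conf w P) (.mid u w P)
  | grabBy2 {u w : V} {P : Set ι} {j : ι} :
      G.owner w ∈ P → j ∈ P → AGMove G (.mid u w P) (.conf u (P \ {j}))
  | grabBy1 {u w : V} {P : Set ι} {j : ι} :
      G.owner w ∉ P → j ∉ P → AGMove G (.mid u w P) (.conf u (insert j P))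

/-- The turn-based game induced by an always-grabbing pawn game. -/
def PawnGame.AG {V ι : Type*} (G : PawnGame V ι) : TB (GPos V ι) where
  move := AGMove G
  total := by
    rintro (⟨w, P⟩ | ⟨u, w, P⟩)
    · obtain ⟨u, hu⟩ := G.total w
      exact ⟨.mid u w P, .step hu⟩
    · by_cases h : G.owner w ∈ P
      · exact ⟨.conf u (P \ {G.owner w}), .grabBy2 h h⟩
      · exact ⟨.conf u (insert (G.owner w) P), .grabBy1 h h⟩
  turn1 := fun p =>
    match p with
    | .conf w P => G.owner w ∈ P
    | .mid _ w P => G.owner w ∉ P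
  target := fun p =>
    match p with
    | .conf w _ => G.target w
    | .mid _ _ _ => False


section AuxAG

open GPos

variable {V ι : Type*}

/-- Relation between a "big" position and a "small" position: same token data,
the small pawn set is contained in the big one, and the owner of the relevant
vertex belongs to one iff it belongs to the other. -/
inductive PRel (G : PawnGame V ι) : GPos V ι → GPos V ι → Prop
  | conf {w : V} {Q Q' : Set ι} (hsub : Q' ⊆ Q)
      (hiff : G.owner w ∈ Q ↔ G.owner w ∈ Q') : PRel G (.conf w Q) (.conf w Q')
  | mid {u w : V} {Q Q' : Set ι} (hsub : Q' ⊆ Q)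
      (hiff : G.owner w ∈ Q ↔ G.owner w ∈ Q') : PRel G (.mid u w Q) (.mid u w Q')

lemma PRel_cases {G : PawnGame V ι} {x y : GPos V ι} (h : PRel G x y) :
    (∃ w Q Q', x = GPos.conf w Q ∧ y = GPos.conf w Q' ∧ Q' ⊆ Q ∧
      (G.owner w ∈ Q ↔ G.owner w ∈ Q')) ∨
    (∃ u w Q Q', x = GPos.mid u w Q ∧ y = GPos.mid u w Q' ∧ Q' ⊆ Q ∧
      (G.owner w ∈ Q ↔ G.owner w ∈ Q')) := by
  cases h with
  | conf hs hi => exact Or.inl ⟨_, _, _, rfl, rfl, hs, hi⟩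
  | mid hs hi => exact Or.inr ⟨_, _, _, _, rfl, rfl, hs, hi⟩

/-- How the big side mimics a move made on the small side. -/
noncomputable def bigFollow (G : PawnGame V ι) :
    GPos V ι → GPos V ι → GPos V ι → GPos V ι
  | .conf w Q, _, .mid u _ _ => .mid u w Q
  | .mid u w Q, .mid _ _ R, .conf _ Rnew =>
      .conf u (if G.owner u ∈ Q ∧ G.owner u ∉ R then Q \ {G.owner u} else Q \ (R \ Rnew))
  | q, _, _ => q

/-- How the small side mimics a move made on the big side. -/
noncomputable def smallFollow (G : PawnGame V ι) :
    GPos V ι → GPos V ι → GPos V ι → GPos V ι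
  | .conf w Q, _, .mid u _ _ => .mid u w Q
  | .mid u w Q, .mid _ _ R, .conf _ Rnew =>
      .conf u (if G.owner u ∈ R ∧ G.owner u ∉ Q then insert (G.owner u) Q else Q ∪ (Rnew \ R))
  | q, _, _ => q

lemma AGMove_conf_inv {G : PawnGame V ι} {w : V} {Q : Set ι} {X : GPos V ι}
    (h : AGMove G (.conf w Q) X) : ∃ u, G.E w u ∧ X = GPos.mid u w Q := by
  cases h with | step hE => exact ⟨_, hE, rfl⟩

lemma AGMove_mid_inv1 {G : PawnGame V ι} {u w : V} {Q : Set ι} {X : GPos V ι}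
    (hw : G.owner w ∈ Q) (h : AGMove G (.mid u w Q) X) :
    ∃ j, j ∈ Q ∧ X = GPos.conf u (Q \ {j}) := by
  cases h with
  | grabBy2 _ hj => exact ⟨_, hj, rfl⟩
  | grabBy1 hn _ => exact absurd hw hn

lemma AGMove_mid_inv2 {G : PawnGame V ι} {u w : V} {Q : Set ι} {X : GPos V ι}
    (hw : G.owner w ∉ Q) (h : AGMove G (.mid u w Q) X) :
    ∃ j, j ∉ Q ∧ X = GPos.conf u (insert j Q) := by
  cases h with
  | grabBy2 hn _ => exact absurd hn hw
  | grabBy1 _ hj => exact ⟨_, hj, rfl⟩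

/-- Key grab-mimicking lemma: the big side can answer a grab on the small side. -/
lemma bigFollow_grab {G : PawnGame V ι} {u w : V} {Q Q' : Set ι} {j : ι}
    (hsub : Q' ⊆ Q) (hw : G.owner w ∈ Q) (hw' : G.owner w ∈ Q') (hj : j ∈ Q') :
    AGMove G (.mid u w Q) (bigFollow G (.mid u w Q) (.mid u w Q') (.conf u (Q' \ {j}))) ∧
      PRel G (bigFollow G (.mid u w Q) (.mid u w Q') (.conf u (Q' \ {j})))
        (.conf u (Q' \ {j})) := by
  have hset : Q' \ (Q' \ {j}) = {j} := by
    ext x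
    simp only [Set.mem_diff, Set.mem_singleton_iff, not_and, not_not]
    constructor
    · rintro ⟨hx, h2⟩
      by_contra hne
      exact hne (h2 hx)
    · rintro rfl
      exact ⟨hj, fun _ => rfl⟩
  simp only [bigFollow]
  split_ifs with hc
  · refine ⟨AGMove.grabBy2 hw hc.1, PRel.conf ?_ ?_⟩
    · intro x hx
      exact ⟨hsub hx.1, fun hxe => hc.2 (by rw [← hxe]; exact hx.1)⟩
    · exact ⟨fun h2 => absurd rfl h2.2, fun h2 => absurd h2.1 hc.2⟩
  · rw [hset]
    push_neg at hc
    refine ⟨AGMove.grabBy2 hw (hsub hj), PRel.conf ?_ ?_⟩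
    · intro x hx
      exact ⟨hsub hx.1, hx.2⟩
    · simp only [Set.mem_diff, Set.mem_singleton_iff]
      constructor
      · rintro ⟨h1, h2⟩; exact ⟨hc h1, h2⟩
      · rintro ⟨h1, h2⟩; exact ⟨hsub h1, h2⟩

/-- Key grab-mimicking lemma: the small side can answer a grab on the big side. -/
lemma smallFollow_grab {G : PawnGame V ι} {u w : V} {Q Q' : Set ι} {j : ι}
    (hsub : Q' ⊆ Q) (hw : G.owner w ∉ Q) (hw' : G.owner w ∉ Q') (hj : j ∉ Q) :
    AGMove G (.mid u w Q') (smallFollow G (.mid u w Q') (.mid u w Q) (.conf u (insert j Q))) ∧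
      PRel G (.conf u (insert j Q))
        (smallFollow G (.mid u w Q') (.mid u w Q) (.conf u (insert j Q))) := by
  have hset : insert j Q \ Q = {j} := by
    ext x
    simp only [Set.mem_diff, Set.mem_insert_iff, Set.mem_singleton_iff]
    constructor
    · rintro ⟨hx | hx, h2⟩
      · exact hx
      · exact absurd hx h2
    · rintro rfl
      exact ⟨Or.inl rfl, hj⟩
  simp only [smallFollow]
  split_ifs with hc
  · refine ⟨AGMove.grabBy1 hw' hc.2, PRel.conf ?_ ?_⟩
    · intro x hx
      rcases hx with hx | hx
      · rw [hx]; exact Or.inr hc.1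
      · exact Or.inr (hsub hx)
    · exact ⟨fun _ => Or.inl rfl, fun _ => Or.inr hc.1⟩
  · rw [hset]
    push_neg at hc
    have hj' : j ∉ Q' := fun h => hj (hsub h)
    refine ⟨?_, PRel.conf ?_ ?_⟩
    · have : Q' ∪ {j} = insert j Q' := by
        ext x; simp [Set.mem_union, or_comm]
      rw [this]
      exact AGMove.grabBy1 hw' hj'
    · intro x hx
      rcases hx with hx | hx
      · exact Or.inr (hsub hx)
      · exact Or.inl hx
    · simp only [Set.mem_insert_iff, Set.mem_union, Set.mem_singleton_iff]
      constructor
      · rintro (h | h)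
        · exact Or.inr h
        · exact Or.inl (hc h)
      · rintro (h | h)
        · exact Or.inr (hsub h)
        · exact Or.inl h

/-- Deterministic simulation sequence: at positions satisfying `useF` the strategy `f`
moves, otherwise the move mimics (via `fol`) the externally given play `r`. -/
noncomputable def simSeq {Pos : Type*} (f : Strat Pos) (useF : Pos → Prop)
    (fol : Pos → Pos → Pos → Pos) (q0 : Pos) (r : ℕ → Pos) : ℕ → List Pos × Pos
  | 0 => ([], q0)
  | n + 1 =>
      let hp := simSeq f useF fol q0 r n
      (hp.1 ++ [hp.2], if useF hp.2 then f hp.1 hp.2 else fol hp.2 (r n) (r (n + 1)))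

lemma simSeq_congr {Pos : Type*} (f : Strat Pos) (useF : Pos → Prop)
    (fol : Pos → Pos → Pos → Pos) (q0 : Pos) {r r' : ℕ → Pos} :
    ∀ n, (∀ i, i ≤ n → r i = r' i) →
      simSeq f useF fol q0 r n = simSeq f useF fol q0 r' n
  | 0, _ => rfl
  | n + 1, h => by
      have ih := simSeq_congr f useF fol q0 n (fun i hi => h i (Nat.le_succ_of_le hi))
      simp only [simSeq, ih, h n (Nat.le_succ n), h (n + 1) le_rfl]

/-- Patch a strategy so that it is always legal. -/
noncomputable def TB.guard {Pos : Type*} (g : TB Pos) (c : Strat Pos) : Strat Pos :=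
  fun h p => if g.move p (c h p) then c h p else Classical.choose (g.total p)

lemma TB.guard_legal {Pos : Type*} (g : TB Pos) (c : Strat Pos) :
    g.Legal (g.guard c) := by
  intro h p
  unfold TB.guard
  split
  · assumption
  · exact Classical.choose_spec (g.total p)

lemma TB.guard_eq {Pos : Type*} (g : TB Pos) (c : Strat Pos) {h : List Pos} {p : Pos}
    (hm : g.move p (c h p)) : g.guard c h p = c h p := if_pos hm

lemma TB.histPlay_fst {Pos : Type*} (g : TB Pos) (f1 f2 : Strat Pos) (p0 : Pos) :
    ∀ n, (g.histPlay f1 f2 p0 n).1 = (List.range n).map (g.play f1 f2 p0)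
  | 0 => rfl
  | n + 1 => by
      simp only [TB.histPlay, List.range_succ, List.map_append, List.map_cons, List.map_nil]
      rw [TB.histPlay_fst g f1 f2 p0 n]
      rfl

lemma TB.histPlay_len {Pos : Type*} (g : TB Pos) (f1 f2 : Strat Pos) (p0 : Pos) (n : ℕ) :
    (g.histPlay f1 f2 p0 n).1.length = n := by
  rw [TB.histPlay_fst]; simp

lemma getD_map_range {α : Type*} (f : ℕ → α) (d : α) {i n : ℕ} (h : i < n) :
    ((List.range n).map f).getD i d = f i := by
  rw [List.getD_eq_getElem?_getD, List.getElem?_map, List.getElem?_range h]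
  rfl

end AuxAG


section MainAG

open GPos

variable {V ι : Type*}

/-- Player 1's mimicking strategy for the smaller pawn set. -/
noncomputable def cand1 (G : PawnGame V ι) (f1 : Strat (GPos V ι)) (v : V) (P : Set ι) :
    Strat (GPos V ι) := fun h p =>
  smallFollow G p
    (simSeq f1 G.AG.turn1 (bigFollow G) (.conf v P) (fun i => (h ++ [p]).getD i p) h.length).2
    (f1 (simSeq f1 G.AG.turn1 (bigFollow G) (.conf v P) (fun i => (h ++ [p]).getD i p) h.length).1
      (simSeq f1 G.AG.turn1 (bigFollow G) (.conf v P) (fun i => (h ++ [p]).getD i p) h.length).2)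

lemma AG_win1_mono (G : PawnGame V ι) (v : V) (P P' : Set ι)
    (hsub : P' ⊆ P) (hiff : G.owner v ∈ P ↔ G.owner v ∈ P')
    (hwin : G.AG.Win1 (.conf v P)) : G.AG.Win1 (.conf v P') := by
  classical
  obtain ⟨f1, hleg, hwin⟩ := hwin
  refine ⟨G.AG.guard (cand1 G f1 v P), G.AG.guard_legal _, ?_⟩
  intro f2' hf2'
  set F1 : Strat (GPos V ι) := G.AG.guard (cand1 G f1 v P) with hF1
  set r : ℕ → GPos V ι := fun n => G.AG.play F1 f2' (.conf v P') n with hr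
  set f2sim : Strat (GPos V ι) :=
    G.AG.guard (fun H q => bigFollow G q (r H.length) (r (H.length + 1))) with hf2sim
  have main : ∀ n,
      G.AG.histPlay f1 f2sim (.conf v P) n
          = simSeq f1 G.AG.turn1 (bigFollow G) (.conf v P) r n ∧
        PRel G (G.AG.histPlay f1 f2sim (.conf v P) n).2
          (G.AG.histPlay F1 f2' (.conf v P') n).2 := by
    intro n
    induction n with
    | zero => exact ⟨rfl, PRel.conf hsub hiff⟩
    | succ n ih =>
      obtain ⟨ihEq, ihRel⟩ := ih
      set IM := G.AG.histPlay f1 f2sim (.conf v P) n with hIM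
      set RE := G.AG.histPlay F1 f2' (.conf v P') n with hRE
      have hlenR : RE.1.length = n := by rw [hRE]; exact G.AG.histPlay_len _ _ _ n
      have hlenI : IM.1.length = n := by rw [hIM]; exact G.AG.histPlay_len _ _ _ n
      have hrn : r n = RE.2 := rfl
      have hrn1 : r (n + 1)
          = (if G.AG.turn1 RE.2 then F1 RE.1 RE.2 else f2' RE.1 RE.2) := rfl
      have eIM : G.AG.histPlay f1 f2sim (GPos.conf v P) (n + 1)
          = (IM.1 ++ [IM.2],
            if G.AG.turn1 IM.2 then f1 IM.1 IM.2 else f2sim IM.1 IM.2) := rfl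
      have eRE : G.AG.histPlay F1 f2' (GPos.conf v P') (n + 1)
          = (RE.1 ++ [RE.2],
            if G.AG.turn1 RE.2 then F1 RE.1 RE.2 else f2' RE.1 RE.2) := rfl
      have eS : simSeq f1 G.AG.turn1 (bigFollow G) (GPos.conf v P) r (n + 1)
          = (IM.1 ++ [IM.2],
            if G.AG.turn1 IM.2 then f1 IM.1 IM.2
            else bigFollow G IM.2 (r n) (r (n + 1))) := by
        rw [ihEq]; simp only [simSeq]
      have hcand : cand1 G f1 v P RE.1 RE.2 = smallFollow G RE.2 IM.2 (f1 IM.1 IM.2) := by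
        have h1 : RE.1 ++ [RE.2]
            = (List.range (n + 1)).map (G.AG.play F1 f2' (.conf v P')) := by
          rw [hRE, G.AG.histPlay_fst, List.range_succ, List.map_append, List.map_cons,
            List.map_nil]
          rfl
        have hargs : ∀ i, i ≤ n → (RE.1 ++ [RE.2]).getD i RE.2 = r i := by
          intro i hi
          rw [h1, getD_map_range _ _ (Nat.lt_succ_of_le hi)]
        have hsim : simSeq f1 G.AG.turn1 (bigFollow G) (GPos.conf v P)
            (fun i => (RE.1 ++ [RE.2]).getD i RE.2) RE.1.length = IM := by
          rw [hlenR, simSeq_congr _ _ _ _ n hargs, ← ihEq]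
        show smallFollow G RE.2 _ _ = _
        rw [hsim]
      rcases PRel_cases ihRel with ⟨w, Q, Q', hx, hy, hs, hi⟩ | ⟨u, w, Q, Q', hx, hy, hs, hi⟩
      · by_cases ho : G.owner w ∈ Q
        · -- Player 1 moves the token on both sides
          have ho' : G.owner w ∈ Q' := hi.mp ho
          have htI : G.AG.turn1 IM.2 := by rw [hx]; exact ho
          have htR : G.AG.turn1 RE.2 := by rw [hy]; exact ho'
          have hmvI : AGMove G (GPos.conf w Q) (f1 IM.1 IM.2) := by
            have h := hleg IM.1 IM.2
            nth_rewrite 1 [hx] at h; exact h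
          obtain ⟨u, hE, hfeq⟩ := AGMove_conf_inv hmvI
          have hcv : cand1 G f1 v P RE.1 RE.2 = GPos.mid u w Q' := by
            rw [hcand, hfeq, hy, hx]; rfl
          have hmvR : G.AG.move RE.2 (cand1 G f1 v P RE.1 RE.2) := by
            rw [hcv, hy]; exact AGMove.step hE
          have hF1v : F1 RE.1 RE.2 = GPos.mid u w Q' := by
            rw [hF1, G.AG.guard_eq _ hmvR, hcv]
          refine ⟨?_, ?_⟩
          · rw [eIM, eS, if_pos htI, if_pos htI]
          · have e1 : (G.AG.histPlay f1 f2sim (GPos.conf v P) (n + 1)).2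
                = f1 IM.1 IM.2 := by rw [eIM]; exact if_pos htI
            have e2 : (G.AG.histPlay F1 f2' (GPos.conf v P') (n + 1)).2
                = F1 RE.1 RE.2 := by rw [eRE]; exact if_pos htR
            rw [e1, e2, hfeq, hF1v]
            exact PRel.mid hs hi
        · -- Player 2 moves the token on both sides
          have ho' : G.owner w ∉ Q' := fun h => ho (hi.mpr h)
          have htI : ¬ G.AG.turn1 IM.2 := by rw [hx]; exact ho
          have htR : ¬ G.AG.turn1 RE.2 := by rw [hy]; exact ho'
          have hmvR : AGMove G (GPos.conf w Q') (f2' RE.1 RE.2) := by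
            have h := hf2' RE.1 RE.2
            nth_rewrite 1 [hy] at h; exact h
          obtain ⟨u, hE, hfeq⟩ := AGMove_conf_inv hmvR
          have hrn1' : r (n + 1) = GPos.mid u w Q' := by
            rw [hrn1, if_neg htR, hfeq]
          have hcimv : bigFollow G IM.2 (r n) (r (n + 1)) = GPos.mid u w Q := by
            rw [hx, hrn, hy, hrn1']; rfl
          have hmvI2 : G.AG.move IM.2
              (bigFollow G IM.2 (r IM.1.length) (r (IM.1.length + 1))) := by
            rw [hlenI, hcimv, hx]; exact AGMove.step hE
          have hf2simv : f2sim IM.1 IM.2 = GPos.mid u w Q := by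
            rw [hf2sim, G.AG.guard_eq _ hmvI2]
            show bigFollow G IM.2 (r IM.1.length) (r (IM.1.length + 1)) = _
            rw [hlenI, hcimv]
          refine ⟨?_, ?_⟩
          · rw [eIM, eS, if_neg htI, if_neg htI, hf2simv, hcimv]
          · have e1 : (G.AG.histPlay f1 f2sim (GPos.conf v P) (n + 1)).2
                = f2sim IM.1 IM.2 := by rw [eIM]; exact if_neg htI
            have e2 : (G.AG.histPlay F1 f2' (GPos.conf v P') (n + 1)).2
                = f2' RE.1 RE.2 := by rw [eRE]; exact if_neg htR
            rw [e1, e2, hf2simv, hfeq]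
            exact PRel.mid hs hi
      · by_cases ho : G.owner w ∈ Q
        · -- Player 2 grabs on both sides
          have ho' : G.owner w ∈ Q' := hi.mp ho
          have htI : ¬ G.AG.turn1 IM.2 := by rw [hx]; exact fun h => h ho
          have htR : ¬ G.AG.turn1 RE.2 := by rw [hy]; exact fun h => h ho'
          have hmvR : AGMove G (GPos.mid u w Q') (f2' RE.1 RE.2) := by
            have h := hf2' RE.1 RE.2
            nth_rewrite 1 [hy] at h; exact h
          obtain ⟨j, hj, hfeq⟩ := AGMove_mid_inv1 ho' hmvR
          obtain ⟨hmvB, hrelB⟩ := bigFollow_grab (u := u) hs ho ho' hj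
          have hrn1' : r (n + 1) = GPos.conf u (Q' \ {j}) := by
            rw [hrn1, if_neg htR, hfeq]
          have hcimv : bigFollow G IM.2 (r n) (r (n + 1))
              = bigFollow G (GPos.mid u w Q) (GPos.mid u w Q') (GPos.conf u (Q' \ {j})) := by
            rw [hx, hrn, hy, hrn1']
          have hmvI2 : G.AG.move IM.2
              (bigFollow G IM.2 (r IM.1.length) (r (IM.1.length + 1))) := by
            rw [hlenI, hcimv, hx]; exact hmvB
          have hf2simv : f2sim IM.1 IM.2
              = bigFollow G (GPos.mid u w Q) (GPos.mid u w Q') (GPos.conf u (Q' \ {j})) := by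
            rw [hf2sim, G.AG.guard_eq _ hmvI2]
            show bigFollow G IM.2 (r IM.1.length) (r (IM.1.length + 1)) = _
            rw [hlenI, hcimv]
          refine ⟨?_, ?_⟩
          · rw [eIM, eS, if_neg htI, if_neg htI, hf2simv, hcimv]
          · have e1 : (G.AG.histPlay f1 f2sim (GPos.conf v P) (n + 1)).2
                = f2sim IM.1 IM.2 := by rw [eIM]; exact if_neg htI
            have e2 : (G.AG.histPlay F1 f2' (GPos.conf v P') (n + 1)).2
                = f2' RE.1 RE.2 := by rw [eRE]; exact if_neg htR
            rw [e1, e2, hf2simv, hfeq]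
            exact hrelB
        · -- Player 1 grabs on both sides
          have ho' : G.owner w ∉ Q' := fun h => ho (hi.mpr h)
          have htI : G.AG.turn1 IM.2 := by rw [hx]; exact ho
          have htR : G.AG.turn1 RE.2 := by rw [hy]; exact ho'
          have hmvI : AGMove G (GPos.mid u w Q) (f1 IM.1 IM.2) := by
            have h := hleg IM.1 IM.2
            nth_rewrite 1 [hx] at h; exact h
          obtain ⟨j, hj, hfeq⟩ := AGMove_mid_inv2 ho hmvI
          obtain ⟨hmvS, hrelS⟩ := smallFollow_grab (u := u) hs ho ho' hj
          have hcv : cand1 G f1 v P RE.1 RE.2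
              = smallFollow G (GPos.mid u w Q') (GPos.mid u w Q)
                  (GPos.conf u (insert j Q)) := by
            rw [hcand, hfeq, hy, hx]
          have hmvR : G.AG.move RE.2 (cand1 G f1 v P RE.1 RE.2) := by
            rw [hcv, hy]; exact hmvS
          have hF1v : F1 RE.1 RE.2
              = smallFollow G (GPos.mid u w Q') (GPos.mid u w Q)
                  (GPos.conf u (insert j Q)) := by
            rw [hF1, G.AG.guard_eq _ hmvR, hcv]
          refine ⟨?_, ?_⟩
          · rw [eIM, eS, if_pos htI, if_pos htI]
          · have e1 : (G.AG.histPlay f1 f2sim (GPos.conf v P) (n + 1)).2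
                = f1 IM.1 IM.2 := by rw [eIM]; exact if_pos htI
            have e2 : (G.AG.histPlay F1 f2' (GPos.conf v P') (n + 1)).2
                = F1 RE.1 RE.2 := by rw [eRE]; exact if_pos htR
            rw [e1, e2, hfeq, hF1v]
            exact hrelS
  obtain ⟨n, hn⟩ := hwin f2sim (G.AG.guard_legal _)
  obtain ⟨-, hRel⟩ := main n
  refine ⟨n, ?_⟩
  simp only [TB.play] at hn ⊢
  rcases PRel_cases hRel with ⟨w, Q, Q', hx, hy, -, -⟩ | ⟨u, w, Q, Q', hx, hy, -, -⟩
  · rw [hy]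
    rw [hx] at hn
    exact hn
  · rw [hx] at hn
    exact (show False from hn).elim

/-- Player 2's mimicking strategy for the larger pawn set. -/
noncomputable def cand2 (G : PawnGame V ι) (f2' : Strat (GPos V ι)) (v : V) (P' : Set ι) :
    Strat (GPos V ι) := fun h p =>
  bigFollow G p
    (simSeq f2' (fun q => ¬ G.AG.turn1 q) (smallFollow G) (.conf v P')
      (fun i => (h ++ [p]).getD i p) h.length).2
    (f2' (simSeq f2' (fun q => ¬ G.AG.turn1 q) (smallFollow G) (.conf v P')
        (fun i => (h ++ [p]).getD i p) h.length).1
      (simSeq f2' (fun q => ¬ G.AG.turn1 q) (smallFollow G) (.conf v P')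
        (fun i => (h ++ [p]).getD i p) h.length).2)

lemma AG_win2_mono (G : PawnGame V ι) (v : V) (P P' : Set ι)
    (hsub : P' ⊆ P) (hiff : G.owner v ∈ P ↔ G.owner v ∈ P')
    (hwin : G.AG.Win2 (.conf v P')) : G.AG.Win2 (.conf v P) := by
  classical
  obtain ⟨f2', hleg2, hwin2⟩ := hwin
  refine ⟨G.AG.guard (cand2 G f2' v P'), G.AG.guard_legal _, ?_⟩
  intro f1 hf1
  set F2 : Strat (GPos V ι) := G.AG.guard (cand2 G f2' v P') with hF2
  set r : ℕ → GPos V ι := fun n => G.AG.play f1 F2 (.conf v P) n with hr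
  set f1sim : Strat (GPos V ι) :=
    G.AG.guard (fun H q => smallFollow G q (r H.length) (r (H.length + 1))) with hf1sim
  have main : ∀ n,
      G.AG.histPlay f1sim f2' (.conf v P') n
          = simSeq f2' (fun q => ¬ G.AG.turn1 q) (smallFollow G) (.conf v P') r n ∧
        PRel G (G.AG.histPlay f1 F2 (.conf v P) n).2
          (G.AG.histPlay f1sim f2' (.conf v P') n).2 := by
    intro n
    induction n with
    | zero => exact ⟨rfl, PRel.conf hsub hiff⟩
    | succ n ih =>
      obtain ⟨ihEq, ihRel⟩ := ih
      set IM := G.AG.histPlay f1sim f2' (.conf v P') n with hIM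
      set RE := G.AG.histPlay f1 F2 (.conf v P) n with hRE
      have hlenR : RE.1.length = n := by rw [hRE]; exact G.AG.histPlay_len _ _ _ n
      have hlenI : IM.1.length = n := by rw [hIM]; exact G.AG.histPlay_len _ _ _ n
      have hrn : r n = RE.2 := rfl
      have hrn1 : r (n + 1)
          = (if G.AG.turn1 RE.2 then f1 RE.1 RE.2 else F2 RE.1 RE.2) := rfl
      have eIM : G.AG.histPlay f1sim f2' (GPos.conf v P') (n + 1)
          = (IM.1 ++ [IM.2],
            if G.AG.turn1 IM.2 then f1sim IM.1 IM.2 else f2' IM.1 IM.2) := rfl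
      have eRE : G.AG.histPlay f1 F2 (GPos.conf v P) (n + 1)
          = (RE.1 ++ [RE.2],
            if G.AG.turn1 RE.2 then f1 RE.1 RE.2 else F2 RE.1 RE.2) := rfl
      have eS : simSeq f2' (fun q => ¬ G.AG.turn1 q) (smallFollow G) (GPos.conf v P') r (n + 1)
          = (IM.1 ++ [IM.2],
            if ¬ G.AG.turn1 IM.2 then f2' IM.1 IM.2
            else smallFollow G IM.2 (r n) (r (n + 1))) := by
        rw [ihEq]; simp only [simSeq]
        by_cases hc : G.AG.turn1
            (simSeq f2' (fun q => ¬G.AG.turn1 q) (smallFollow G) (GPos.conf v P') r n).2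
        · rw [if_neg (not_not_intro hc), if_neg (not_not_intro hc)]
        · rw [if_pos hc, if_pos hc]
      have hcand : cand2 G f2' v P' RE.1 RE.2 = bigFollow G RE.2 IM.2 (f2' IM.1 IM.2) := by
        have h1 : RE.1 ++ [RE.2]
            = (List.range (n + 1)).map (G.AG.play f1 F2 (.conf v P)) := by
          rw [hRE, G.AG.histPlay_fst, List.range_succ, List.map_append, List.map_cons,
            List.map_nil]
          rfl
        have hargs : ∀ i, i ≤ n → (RE.1 ++ [RE.2]).getD i RE.2 = r i := by
          intro i hi
          rw [h1, getD_map_range _ _ (Nat.lt_succ_of_le hi)]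
        have hsim : simSeq f2' (fun q => ¬ G.AG.turn1 q) (smallFollow G) (GPos.conf v P')
            (fun i => (RE.1 ++ [RE.2]).getD i RE.2) RE.1.length = IM := by
          rw [hlenR, simSeq_congr _ _ _ _ n hargs, ← ihEq]
        show bigFollow G RE.2 _ _ = _
        rw [hsim]
      rcases PRel_cases ihRel with ⟨w, Q, Q', hx, hy, hs, hi⟩ | ⟨u, w, Q, Q', hx, hy, hs, hi⟩
      · by_cases ho : G.owner w ∈ Q
        · -- Player 1 moves the token on both sides; here `f1` is the adversary
          have ho' : G.owner w ∈ Q' := hi.mp ho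
          have htI : G.AG.turn1 IM.2 := by rw [hy]; exact ho'
          have htR : G.AG.turn1 RE.2 := by rw [hx]; exact ho
          have hmvR : AGMove G (GPos.conf w Q) (f1 RE.1 RE.2) := by
            have h := hf1 RE.1 RE.2
            nth_rewrite 1 [hx] at h; exact h
          obtain ⟨u, hE, hfeq⟩ := AGMove_conf_inv hmvR
          have hrn1' : r (n + 1) = GPos.mid u w Q := by
            rw [hrn1, if_pos htR, hfeq]
          have hcsm : smallFollow G IM.2 (r n) (r (n + 1)) = GPos.mid u w Q' := by
            rw [hy, hrn, hx, hrn1']; rfl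
          have hmvI2 : G.AG.move IM.2
              (smallFollow G IM.2 (r IM.1.length) (r (IM.1.length + 1))) := by
            rw [hlenI, hcsm, hy]; exact AGMove.step hE
          have hf1simv : f1sim IM.1 IM.2 = GPos.mid u w Q' := by
            rw [hf1sim, G.AG.guard_eq _ hmvI2]
            show smallFollow G IM.2 (r IM.1.length) (r (IM.1.length + 1)) = _
            rw [hlenI, hcsm]
          refine ⟨?_, ?_⟩
          · rw [eIM, eS, if_pos htI, if_neg (not_not_intro htI), hf1simv, hcsm]
          · have e1 : (G.AG.histPlay f1 F2 (GPos.conf v P) (n + 1)).2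
                = f1 RE.1 RE.2 := by rw [eRE]; exact if_pos htR
            have e2 : (G.AG.histPlay f1sim f2' (GPos.conf v P') (n + 1)).2
                = f1sim IM.1 IM.2 := by rw [eIM]; exact if_pos htI
            rw [e1, e2, hfeq, hf1simv]
            exact PRel.mid hs hi
        · -- Player 2 moves the token on both sides; `f2'` leads
          have ho' : G.owner w ∉ Q' := fun h => ho (hi.mpr h)
          have htI : ¬ G.AG.turn1 IM.2 := by rw [hy]; exact ho'
          have htR : ¬ G.AG.turn1 RE.2 := by rw [hx]; exact ho
          have hmvI : AGMove G (GPos.conf w Q') (f2' IM.1 IM.2) := by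
            have h := hleg2 IM.1 IM.2
            nth_rewrite 1 [hy] at h; exact h
          obtain ⟨u, hE, hfeq⟩ := AGMove_conf_inv hmvI
          have hcv : cand2 G f2' v P' RE.1 RE.2 = GPos.mid u w Q := by
            rw [hcand, hfeq, hx, hy]; rfl
          have hmvR : G.AG.move RE.2 (cand2 G f2' v P' RE.1 RE.2) := by
            rw [hcv, hx]; exact AGMove.step hE
          have hF2v : F2 RE.1 RE.2 = GPos.mid u w Q := by
            rw [hF2, G.AG.guard_eq _ hmvR, hcv]
          refine ⟨?_, ?_⟩
          · rw [eIM, eS, if_neg htI, if_pos htI]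
          · have e1 : (G.AG.histPlay f1 F2 (GPos.conf v P) (n + 1)).2
                = F2 RE.1 RE.2 := by rw [eRE]; exact if_neg htR
            have e2 : (G.AG.histPlay f1sim f2' (GPos.conf v P') (n + 1)).2
                = f2' IM.1 IM.2 := by rw [eIM]; exact if_neg htI
            rw [e1, e2, hF2v, hfeq]
            exact PRel.mid hs hi
      · by_cases ho : G.owner w ∈ Q
        · -- Player 2 grabs on both sides; `f2'` leads
          have ho' : G.owner w ∈ Q' := hi.mp ho
          have htI : ¬ G.AG.turn1 IM.2 := by rw [hy]; exact fun h => h ho'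
          have htR : ¬ G.AG.turn1 RE.2 := by rw [hx]; exact fun h => h ho
          have hmvI : AGMove G (GPos.mid u w Q') (f2' IM.1 IM.2) := by
            have h := hleg2 IM.1 IM.2
            nth_rewrite 1 [hy] at h; exact h
          obtain ⟨j, hj, hfeq⟩ := AGMove_mid_inv1 ho' hmvI
          obtain ⟨hmvB, hrelB⟩ := bigFollow_grab (u := u) hs ho ho' hj
          have hcv : cand2 G f2' v P' RE.1 RE.2
              = bigFollow G (GPos.mid u w Q) (GPos.mid u w Q')
                  (GPos.conf u (Q' \ {j})) := by
            rw [hcand, hfeq, hx, hy]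
          have hmvR : G.AG.move RE.2 (cand2 G f2' v P' RE.1 RE.2) := by
            rw [hcv, hx]; exact hmvB
          have hF2v : F2 RE.1 RE.2
              = bigFollow G (GPos.mid u w Q) (GPos.mid u w Q')
                  (GPos.conf u (Q' \ {j})) := by
            rw [hF2, G.AG.guard_eq _ hmvR, hcv]
          refine ⟨?_, ?_⟩
          · rw [eIM, eS, if_neg htI, if_pos htI]
          · have e1 : (G.AG.histPlay f1 F2 (GPos.conf v P) (n + 1)).2
                = F2 RE.1 RE.2 := by rw [eRE]; exact if_neg htR
            have e2 : (G.AG.histPlay f1sim f2' (GPos.conf v P') (n + 1)).2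
                = f2' IM.1 IM.2 := by rw [eIM]; exact if_neg htI
            rw [e1, e2, hF2v, hfeq]
            exact hrelB
        · -- Player 1 grabs on both sides; here `f1` is the adversary
          have ho' : G.owner w ∉ Q' := fun h => ho (hi.mpr h)
          have htI : G.AG.turn1 IM.2 := by rw [hy]; exact ho'
          have htR : G.AG.turn1 RE.2 := by rw [hx]; exact ho
          have hmvR : AGMove G (GPos.mid u w Q) (f1 RE.1 RE.2) := by
            have h := hf1 RE.1 RE.2
            nth_rewrite 1 [hx] at h; exact h
          obtain ⟨j, hj, hfeq⟩ := AGMove_mid_inv2 ho hmvR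
          obtain ⟨hmvS, hrelS⟩ := smallFollow_grab (u := u) hs ho ho' hj
          have hrn1' : r (n + 1) = GPos.conf u (insert j Q) := by
            rw [hrn1, if_pos htR, hfeq]
          have hcsm : smallFollow G IM.2 (r n) (r (n + 1))
              = smallFollow G (GPos.mid u w Q') (GPos.mid u w Q)
                  (GPos.conf u (insert j Q)) := by
            rw [hy, hrn, hx, hrn1']
          have hmvI2 : G.AG.move IM.2
              (smallFollow G IM.2 (r IM.1.length) (r (IM.1.length + 1))) := by
            rw [hlenI, hcsm, hy]; exact hmvS
          have hf1simv : f1sim IM.1 IM.2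
              = smallFollow G (GPos.mid u w Q') (GPos.mid u w Q)
                  (GPos.conf u (insert j Q)) := by
            rw [hf1sim, G.AG.guard_eq _ hmvI2]
            show smallFollow G IM.2 (r IM.1.length) (r (IM.1.length + 1)) = _
            rw [hlenI, hcsm]
          refine ⟨?_, ?_⟩
          · rw [eIM, eS, if_pos htI, if_neg (not_not_intro htI), hf1simv, hcsm]
          · have e1 : (G.AG.histPlay f1 F2 (GPos.conf v P) (n + 1)).2
                = f1 RE.1 RE.2 := by rw [eRE]; exact if_pos htR
            have e2 : (G.AG.histPlay f1sim f2' (GPos.conf v P') (n + 1)).2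
                = f1sim IM.1 IM.2 := by rw [eIM]; exact if_pos htI
            rw [e1, e2, hfeq, hf1simv]
            exact hrelS
  intro n hn
  obtain ⟨-, hRel⟩ := main n
  have hno := hwin2 f1sim (G.AG.guard_legal _) n
  simp only [TB.play] at hn hno
  rcases PRel_cases hRel with ⟨w, Q, Q', hx, hy, -, -⟩ | ⟨u, w, Q, Q', hx, hy, -, -⟩
  · rw [hx] at hn
    rw [hy] at hno
    exact hno hn
  · rw [hx] at hn
    exact (show False from hn).elim

end MainAG

/-- **Theorem 4.9**: in an MVPP always-grabbing pawn game, for a configuration `⟨v,P⟩`,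
the pawn `j` owning `v`, and `P' ⊆ P`:
(i) if `j ∈ P` implies `j ∈ P'` and Player 1 wins from `⟨v,P⟩`, then Player 1 wins from `⟨v,P'⟩`;
(ii) if `j ∉ P'` implies `j ∉ P` and Player 2 wins from `⟨v,P'⟩`, then Player 2 wins from `⟨v,P⟩`. -/
theorem always_grabbing_fewer_pawns_better {V : Type*} {d : ℕ}
    (G : PawnGame V (Fin d)) (v : V) (P P' : Set (Fin d)) (hsub : P' ⊆ P) :
    ((G.owner v ∈ P → G.owner v ∈ P') →
        G.AG.Win1 (.conf v P) → G.AG.Win1 (.conf v P')) ∧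
    ((G.owner v ∉ P' → G.owner v ∉ P) →
        G.AG.Win2 (.conf v P') → G.AG.Win2 (.conf v P)) := by
  constructor
  · intro h
    exact AG_win1_mono G v P P' hsub ⟨h, fun h' => hsub h'⟩
  · intro h
    refine AG_win2_mono G v P P' hsub ⟨?_, fun h' => hsub h'⟩
    intro hp
    by_contra hn
    exact h hn hp
end

section
/- Given a SET-COVER instance with universe U = {1,…,n}, collection S = {S₁,…,S_m} of subsets of U, and k ∈ ℕ, construct the MVPP k-grabbing pawn game with vertices V = U ∪ (S × U) ∪ {s,t}, target t, sink s with no path to t, and m+1 pawns: for j ∈ {1,…,m}, pawn j owns {⟨S_j,i⟩ : i ∈ U}, and pawn 0 owns the vertices in U; the edges are N(i) = {⟨S_j,i⟩ : i ∈ S_j} for i ∈ U, N(⟨S_j,i⟩) = {i+1, s} for 1 ≤ i ≤ n−1, and N(⟨S_j,n⟩) = {t, s}. Then Player 1 wins the k-grabbing game from the configuration with the token on vertex 1 and Player 1 controlling only pawn 0 if and only if there is a set cover of size at most k, i.e., a subcollection S' ⊆ S with |S'| ≤ k and ⋃_{S ∈ S'} S = U. -/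
open scoped Classical

/-- Positions of the turn-based game induced by a pawn game under the `k`-grabbing
mechanism: `conf w P r` is a configuration (token on `w`, Player 1 controls the pawns in
`P`, `r` grabs remain), and `mid u P r` is the intermediate position after the token was
moved to `u`, at which Player 1 may grab. -/
inductive KPos (V : Type*) (ι : Type*) where
  | conf (w : V) (P : Set ι) (r : ℕ)
  | mid (u : V) (P : Set ι) (r : ℕ)

/-- Moves of the `k`-grabbing mechanism: after each move of the token Player 1 may grab one
of Player 2's pawns, provided grabs remain; grabbed pawns stay with Player 1 forever. -/
inductive KGMove {V ι : Type*} (G : PawnGame V ι) : KPos V ι → KPos V ι → Prop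
  | step {w u : V} {P : Set ι} {r : ℕ} :
      G.E w u → KGMove G (.conf w P r) (.mid u P r)
  | noGrab {u : V} {P : Set ι} {r : ℕ} : KGMove G (.mid u P r) (.conf u P r)
  | grab {u : V} {P : Set ι} {r : ℕ} {j : ι} :
      j ∉ P → KGMove G (.mid u P (r + 1)) (.conf u (insert j P) r)

/-- The turn-based game induced by a `k`-grabbing pawn game; the intermediate (grabbing)
positions belong to Player 1. -/
def PawnGame.KG {V ι : Type*} (G : PawnGame V ι) : TB (KPos V ι) where
  move := KGMove G
  total := by
    rintro (⟨w, P, r⟩ | ⟨u, P, r⟩)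
    · obtain ⟨u, hu⟩ := G.total w
      exact ⟨.mid u P r, .step hu⟩
    · exact ⟨.conf u P r, .noGrab⟩
  turn1 := fun p =>
    match p with
    | .conf w P _ => G.owner w ∈ P
    | .mid _ _ _ => True
  target := fun p =>
    match p with
    | .conf w _ _ => G.target w
    | .mid _ _ _ => False

/-- Vertices of the pawn game built from a SET-COVER instance: the elements of the
universe `U = {1,…,n}` (represented by `Fin n`), the pairs `⟨S_j,i⟩`, a sink `s` and a
target `t`. -/
inductive SCVert (n m : ℕ) where
  | elem (i : Fin n)
  | pair (j : Fin m) (i : Fin n)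
  | sink
  | targ

/-- The MVPP `k`-grabbing pawn game of Theorem 6.2, built from a SET-COVER instance with
universe `Fin n` and sets `S : Fin m → Set (Fin n)` (assuming every element belongs to
some set, so that every vertex has a successor): `N(i) = {⟨S_j,i⟩ : i ∈ S_j}`,
`N(⟨S_j,i⟩) = {i+1, s}` for `i ≤ n−1` and `N(⟨S_j,n⟩) = {t, s}`; pawn `j ∈ {1,…,m}`
owns `{⟨S_j,i⟩ : i ∈ U}` (encoded `some j`) and pawn `0` (encoded `none`) owns the
element vertices; `t` is the target and `s` is an absorbing sink with no path to `t`. -/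
def scGame {n m : ℕ} (S : Fin m → Set (Fin n)) (hcov : ∀ i : Fin n, ∃ j, i ∈ S j) :
    PawnGame (SCVert n m) (Option (Fin m)) where
  E := fun x y =>
    match x, y with
    | .elem i, .pair j i' => i' = i ∧ i ∈ S j
    | .pair _ i, y =>
        (if h : (i : ℕ) + 1 < n then y = .elem ⟨(i : ℕ) + 1, h⟩ else y = .targ) ∨ y = .sink
    | .sink, y => y = .sink
    | .targ, y => y = .targ
    | _, _ => False
  total := by
    rintro (i | ⟨j, i⟩ | _ | _)
    · obtain ⟨j, hj⟩ := hcov i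
      exact ⟨.pair j i, rfl, hj⟩
    · exact ⟨.sink, Or.inr rfl⟩
    · exact ⟨.sink, rfl⟩
    · exact ⟨.targ, rfl⟩
  owner := fun x =>
    match x with
    | .elem _ => none
    | .pair j _ => some j
    | .sink => none
    | .targ => none
  target := fun x =>
    match x with
    | .targ => True
    | _ => False

/-! ### Auxiliary development for Theorem 6.2 -/

section Aux

lemma TB.play_succ_s15 {Pos : Type*} (g : TB Pos) (f1 f2 : Strat Pos) (p0 : Pos) (t : ℕ) :
    g.play f1 f2 p0 (t + 1) =
      (if g.turn1 (g.play f1 f2 p0 t) then f1 (g.histPlay f1 f2 p0 t).1 (g.play f1 f2 p0 t)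
        else f2 (g.histPlay f1 f2 p0 t).1 (g.play f1 f2 p0 t)) := rfl

lemma TB.play_succ_turn1 {Pos : Type*} (g : TB Pos) (f1 f2 : Strat Pos) (p0 : Pos) (t : ℕ)
    (h : g.turn1 (g.play f1 f2 p0 t)) :
    g.play f1 f2 p0 (t + 1) = f1 (g.histPlay f1 f2 p0 t).1 (g.play f1 f2 p0 t) := by
  rw [g.play_succ_s15, if_pos h]

lemma TB.play_succ_turn2 {Pos : Type*} (g : TB Pos) (f1 f2 : Strat Pos) (p0 : Pos) (t : ℕ)
    (h : ¬ g.turn1 (g.play f1 f2 p0 t)) :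
    g.play f1 f2 p0 (t + 1) = f2 (g.histPlay f1 f2 p0 t).1 (g.play f1 f2 p0 t) := by
  rw [g.play_succ_s15, if_neg h]

lemma TB.move_play {Pos : Type*} (g : TB Pos) {f1 f2 : Strat Pos} (hf1 : g.Legal f1)
    (hf2 : g.Legal f2) (p0 : Pos) (t : ℕ) :
    g.move (g.play f1 f2 p0 t) (g.play f1 f2 p0 (t + 1)) := by
  rw [g.play_succ_s15]
  split
  · exact hf1 _ _
  · exact hf2 _ _

variable {n m : ℕ} (S : Fin m → Set (Fin n)) (hcov : ∀ i : Fin n, ∃ j, i ∈ S j)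

/-- Player 2's "move to the sink" strategy. -/
noncomputable def sinkStrat : Strat (KPos (SCVert n m) (Option (Fin m))) := fun _ p =>
  match p with
  | .conf (.elem i) P r => .mid (.pair (Classical.choose (hcov i)) i) P r
  | .conf (.pair _ _) P r => .mid .sink P r
  | .conf .sink P r => .mid .sink P r
  | .conf .targ P r => .mid .targ P r
  | .mid u P r => .conf u P r

lemma sinkStrat_legal : (scGame S hcov).KG.Legal (sinkStrat S hcov) := by
  rintro h (⟨(i | ⟨j, i⟩ | _ | _), P, r⟩ | ⟨u, P, r⟩)
  · exact .step ⟨rfl, Classical.choose_spec (hcov i)⟩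
  · exact .step (Or.inr rfl)
  · exact .step rfl
  · exact .step rfl
  · exact .noGrab

/-- Player 1's strategy built from a choice function `c` selecting covering sets. -/
noncomputable def coverStrat (c : Fin n → Fin m) :
    Strat (KPos (SCVert n m) (Option (Fin m))) := fun _ p =>
  match p with
  | .conf (.elem i) P r => .mid (.pair (c i) i) P r
  | .conf (.pair _ i) P r =>
      if h : (i : ℕ) + 1 < n then .mid (.elem ⟨(i : ℕ) + 1, h⟩) P r else .mid .targ P r
  | .conf .sink P r => .mid .sink P r
  | .conf .targ P r => .mid .targ P r
  | .mid (.pair j i) P r =>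
      if some j ∈ P then .conf (.pair j i) P r
      else match r with
        | 0 => .conf (.pair j i) P 0
        | r' + 1 => .conf (.pair j i) (insert (some j) P) r'
  | .mid u P r => .conf u P r

lemma coverStrat_legal (c : Fin n → Fin m) (hc : ∀ i, i ∈ S (c i)) :
    (scGame S hcov).KG.Legal (coverStrat c) := by
  rintro h (⟨(i | ⟨j, i⟩ | _ | _), P, r⟩ | ⟨(i | ⟨j, i⟩ | _ | _), P, r⟩)
  · exact .step ⟨rfl, hc i⟩
  · show KGMove _ _ (if h : (i : ℕ) + 1 < n then _ else _)
    split
    · exact .step (Or.inl (by rw [dif_pos ‹_›]))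
    · exact .step (Or.inl (by rw [dif_neg ‹_›]))
  · exact .step rfl
  · exact .step rfl
  · exact .noGrab
  · show KGMove _ _ (if some j ∈ P then _ else _)
    split
    · exact .noGrab
    · match r with
      | 0 => exact .noGrab
      | r' + 1 => exact .grab ‹_›
  · exact .noGrab
  · exact .noGrab

/-- The pawn set controlled by Player 1 when the grabbed pawns are those in `g`. -/
def Pset (g : Finset (Fin m)) : Set (Option (Fin m)) :=
  insert none (Option.some '' (g : Set (Fin m)))

lemma none_mem_Pset (g : Finset (Fin m)) : (none : Option (Fin m)) ∈ Pset g :=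
  Set.mem_insert _ _

lemma some_mem_Pset {g : Finset (Fin m)} {j : Fin m} : some j ∈ Pset g ↔ j ∈ g := by
  simp [Pset]

lemma Pset_insert (g : Finset (Fin m)) (j : Fin m) :
    insert (some j) (Pset g) = Pset (insert j g) := by
  simp only [Pset, Finset.coe_insert, Set.image_insert_eq]
  exact Set.insert_comm _ _ _

lemma Pset_empty : (Pset (∅ : Finset (Fin m))) = {(none : Option (Fin m))} := by
  simp [Pset]

end Aux

section Cover

variable {n m : ℕ} (S : Fin m → Set (Fin n)) (hcov : ∀ i : Fin n, ∃ j, i ∈ S j)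

lemma cover_step (S' : Finset (Fin m)) (c : Fin n → Fin m)
    (hcS : ∀ i, c i ∈ S') (f2 : Strat (KPos (SCVert n m) (Option (Fin m))))
    (p0 : KPos (SCVert n m) (Option (Fin m))) (t : ℕ) (i : Fin n)
    (g : Finset (Fin m)) (r : ℕ) (hg : g ⊆ S') (hr : S'.card - g.card ≤ r)
    (hp : (scGame S hcov).KG.play (coverStrat c) f2 p0 t = .conf (.elem i) (Pset g) r) :
    ∃ g' r', g' ⊆ S' ∧ S'.card - g'.card ≤ r' ∧
      (scGame S hcov).KG.play (coverStrat c) f2 p0 (t + 1 + 1 + 1 + 1) =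
        .conf (if h : (i : ℕ) + 1 < n then .elem ⟨(i : ℕ) + 1, h⟩ else .targ) (Pset g') r' := by
  set G := (scGame S hcov) with hG
  have h1 : G.KG.play (coverStrat c) f2 p0 (t + 1) = .mid (.pair (c i) i) (Pset g) r := by
    rw [G.KG.play_succ_turn1 _ _ _ _ (by rw [hp]; exact none_mem_Pset g), hp]; rfl
  -- step 2: possibly grab
  obtain ⟨g', r', hg', hr', hmem, h2⟩ : ∃ g' r', g' ⊆ S' ∧ S'.card - g'.card ≤ r' ∧
      c i ∈ g' ∧ G.KG.play (coverStrat c) f2 p0 (t + 1 + 1) =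
        .conf (.pair (c i) i) (Pset g') r' := by
    have h2 := G.KG.play_succ_turn1 (coverStrat c) f2 p0 (t + 1) (by rw [h1]; trivial)
    rw [h1] at h2
    by_cases hmem : c i ∈ g
    · refine ⟨g, r, hg, hr, hmem, ?_⟩
      rw [h2]
      show (if some (c i) ∈ Pset g then _ else _) = _
      rw [if_pos (some_mem_Pset.2 hmem)]
    · have hlt : g.card < S'.card :=
        Finset.card_lt_card (Finset.ssubset_iff_of_subset hg |>.2 ⟨c i, hcS i, hmem⟩)
      obtain ⟨r0, rfl⟩ : ∃ r0, r = r0 + 1 := by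
        cases r with
        | zero => omega
        | succ r0 => exact ⟨r0, rfl⟩
      refine ⟨insert (c i) g, r0, Finset.insert_subset (hcS i) hg, ?_, Finset.mem_insert_self _ _, ?_⟩
      · rw [Finset.card_insert_of_notMem hmem]; omega
      · rw [h2]
        show (if some (c i) ∈ Pset g then _ else _) = _
        rw [if_neg (fun h => hmem (some_mem_Pset.1 h))]
        rw [Pset_insert]
  have h3 := G.KG.play_succ_turn1 (coverStrat c) f2 p0 (t + 1 + 1)
      (by rw [h2]; exact some_mem_Pset.2 hmem)
  rw [h2] at h3
  refine ⟨g', r', hg', hr', ?_⟩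
  by_cases hin : (i : ℕ) + 1 < n
  · have h3' : G.KG.play (coverStrat c) f2 p0 (t + 1 + 1 + 1) =
        .mid (.elem ⟨(i : ℕ) + 1, hin⟩) (Pset g') r' := by
      rw [h3]; show (if h : (i : ℕ) + 1 < n then _ else _) = _; rw [dif_pos hin]
    rw [G.KG.play_succ_turn1 (coverStrat c) f2 p0 (t + 1 + 1 + 1) (by rw [h3']; trivial), h3',
      dif_pos hin]; rfl
  · have h3' : G.KG.play (coverStrat c) f2 p0 (t + 1 + 1 + 1) =
        .mid .targ (Pset g') r' := by
      rw [h3]; show (if h : (i : ℕ) + 1 < n then _ else _) = _; rw [dif_neg hin]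
    rw [G.KG.play_succ_turn1 (coverStrat c) f2 p0 (t + 1 + 1 + 1) (by rw [h3']; trivial), h3',
      dif_neg hin]; rfl

end Cover

section Cover2

variable {n m : ℕ} (S : Fin m → Set (Fin n)) (hcov : ∀ i : Fin n, ∃ j, i ∈ S j)

lemma cover_reaches (S' : Finset (Fin m)) (c : Fin n → Fin m) (hcS : ∀ i, c i ∈ S')
    (hn : 0 < n) (k : ℕ) (hk : S'.card ≤ k) (f2 : Strat (KPos (SCVert n m) (Option (Fin m))))
    (i : ℕ) (hi : i < n) :
    ∃ g r, g ⊆ S' ∧ S'.card - g.card ≤ r ∧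
      (scGame S hcov).KG.play (coverStrat c) f2
        (.conf (.elem ⟨0, hn⟩) {(none : Option (Fin m))} k) (4 * i) =
        .conf (.elem ⟨i, hi⟩) (Pset g) r := by
  induction i with
  | zero =>
    refine ⟨∅, k, Finset.empty_subset _, by simpa using hk, ?_⟩
    rw [Pset_empty]; rfl
  | succ i IH =>
    have hi' : i < n := by omega
    obtain ⟨g, r, hg, hr, hp⟩ := IH hi'
    obtain ⟨g', r', hg', hr', hp'⟩ :=
      cover_step S hcov S' c hcS f2 _ (4 * i) ⟨i, hi'⟩ g r hg hr hp
    refine ⟨g', r', hg', hr', ?_⟩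
    have h4 : 4 * (i + 1) = 4 * i + 1 + 1 + 1 + 1 := by ring
    rw [h4, hp']
    have hlt : ((⟨i, hi'⟩ : Fin n) : ℕ) + 1 < n := hi
    rw [dif_pos hlt]

/-- Coverage invariant on vertices. -/
def Cov (S : Fin m → Set (Fin n)) : SCVert n m → Finset (Fin m) → Prop
  | .elem i, g => ∀ i' : Fin n, (i' : ℕ) < (i : ℕ) → ∃ j ∈ g, i' ∈ S j
  | .pair j i, g => i ∈ S j ∧ ∀ i' : Fin n, (i' : ℕ) < (i : ℕ) → ∃ j' ∈ g, i' ∈ S j'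
  | .sink, _ => True
  | .targ, g => ∀ i' : Fin n, ∃ j ∈ g, i' ∈ S j

lemma Cov_mono {g g' : Finset (Fin m)} (hgg : g ⊆ g') :
    ∀ {w}, Cov S w g → Cov S w g' := by
  rintro (i | ⟨j, i⟩ | _ | _) h
  · exact fun i' hi => (h i' hi).imp fun j hj => ⟨hgg hj.1, hj.2⟩
  · exact ⟨h.1, fun i' hi => (h.2 i' hi).imp fun j hj => ⟨hgg hj.1, hj.2⟩⟩
  · trivial
  · exact fun i' => (h i').imp fun j hj => ⟨hgg hj.1, hj.2⟩

lemma sink_inv (k : ℕ) (hn : 0 < n) (f1 : Strat (KPos (SCVert n m) (Option (Fin m))))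
    (hf1 : (scGame S hcov).KG.Legal f1) (t : ℕ) :
    ∃ w g r,
      (scGame S hcov).KG.play f1 (sinkStrat S hcov)
          (.conf (.elem ⟨0, hn⟩) {(none : Option (Fin m))} k) (2 * t) =
        .conf w (Pset g) r ∧ g.card + r ≤ k ∧ Cov S w g := by
  set G := scGame S hcov with hG
  set p0 : KPos (SCVert n m) (Option (Fin m)) :=
    .conf (.elem ⟨0, hn⟩) {(none : Option (Fin m))} k with hp0
  induction t with
  | zero =>
    refine ⟨.elem ⟨0, hn⟩, ∅, k, ?_, by simp, fun i' h => absurd h (Nat.not_lt_zero _)⟩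
    rw [Pset_empty]; rfl
  | succ t IH =>
    obtain ⟨w, g, r, hp, hk, hC⟩ := IH
    have hmv1 := G.KG.move_play hf1 (sinkStrat_legal S hcov) p0 (2 * t)
    rw [hp] at hmv1
    obtain ⟨u, hE, h1⟩ : ∃ u, G.E w u ∧
        G.KG.play f1 (sinkStrat S hcov) p0 (2 * t + 1) = KPos.mid u (Pset g) r := by
      generalize hq : G.KG.play f1 (sinkStrat S hcov) p0 (2 * t + 1) = q at hmv1
      cases hmv1 with
      | step hE => exact ⟨_, hE, rfl⟩
    have hmv2 := G.KG.move_play hf1 (sinkStrat_legal S hcov) p0 (2 * t + 1)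
    rw [h1] at hmv2
    obtain ⟨g', r', hgg, hk', h2⟩ : ∃ g' r', g ⊆ g' ∧ g'.card + r' ≤ k ∧
        G.KG.play f1 (sinkStrat S hcov) p0 (2 * t + 1 + 1) = KPos.conf u (Pset g') r' := by
      generalize hq : G.KG.play f1 (sinkStrat S hcov) p0 (2 * t + 1 + 1) = q at hmv2
      cases hmv2 with
      | noGrab => exact ⟨g, r, Finset.Subset.refl _, hk, rfl⟩
      | @grab _ _ r0 j hj =>
        match j, hj with
        | none, hj => exact absurd (none_mem_Pset g) hj
        | some j0, hj =>
          have hj0 : j0 ∉ g := fun h => hj (some_mem_Pset.2 h)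
          refine ⟨insert j0 g, r0, Finset.subset_insert _ _, ?_, by rw [Pset_insert]⟩
          rw [Finset.card_insert_of_notMem hj0]
          omega
    have hCu : Cov S u g' := by
      cases w with
      | elem i =>
        cases u with
        | pair j i' =>
          have hE' : i' = i ∧ i ∈ S j := hE
          obtain ⟨rfl, hSj⟩ := hE'
          exact ⟨hSj, fun i'' h => Cov_mono S hgg hC i'' h⟩
        | elem _ => exact hE.elim
        | sink => exact hE.elim
        | targ => exact hE.elim
      | pair j i =>
        by_cases hj : j ∈ g
        · have hE' :
              (if h : (i : ℕ) + 1 < n then u = .elem ⟨(i : ℕ) + 1, h⟩ else u = .targ) ∨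
                u = .sink := hE
          rcases hE' with h' | rfl
          · have hCp : i ∈ S j ∧ ∀ i' : Fin n, (i' : ℕ) < (i : ℕ) → ∃ j' ∈ g, i' ∈ S j' := hC
            split_ifs at h' with hin
            · subst h'
              intro i'' hi''
              rcases Nat.lt_succ_iff_lt_or_eq.1 hi'' with h | h
              · exact (hCp.2 i'' h).imp fun j' hj' => ⟨hgg hj'.1, hj'.2⟩
              · have : i'' = i := Fin.ext h
                exact ⟨j, hgg hj, this ▸ hCp.1⟩
            · subst h'
              intro i''
              have hi'' : (i'' : ℕ) < (i : ℕ) + 1 := by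
                have := i''.isLt; omega
              rcases Nat.lt_succ_iff_lt_or_eq.1 hi'' with h | h
              · exact (hCp.2 i'' h).imp fun j' hj' => ⟨hgg hj'.1, hj'.2⟩
              · have : i'' = i := Fin.ext h
                exact ⟨j, hgg hj, this ▸ hCp.1⟩
          · trivial
        · have h1' := G.KG.play_succ_turn2 f1 (sinkStrat S hcov) p0 (2 * t)
            (by rw [hp]; exact fun hmem => hj (some_mem_Pset.1 hmem))
          rw [hp] at h1'
          have h1'' : G.KG.play f1 (sinkStrat S hcov) p0 (2 * t + 1) =
              KPos.mid .sink (Pset g) r := h1'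
          rw [h1] at h1''
          cases h1''
          trivial
      | sink =>
        have h' : u = .sink := hE
        subst h'; trivial
      | targ =>
        have h' : u = .targ := hE
        subst h'
        exact fun i' => (hC i').imp fun j' hj' => ⟨hgg hj'.1, hj'.2⟩
    refine ⟨u, g', r', ?_, hk', hCu⟩
    have h22 : 2 * (t + 1) = 2 * t + 1 + 1 := by ring
    rw [h22]; exact h2

end Cover2

/-- **Theorem 6.2** (NP-hardness reduction from SET-COVER): Player 1 wins the `k`-grabbing
pawn game built from a SET-COVER instance, from the configuration with the token on
vertex `1` and Player 1 controlling only pawn `0`, if and only if the instance has a set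
cover of size at most `k`. -/
theorem set_cover_iff_k_grabbing_win {n m k : ℕ} (hn : 0 < n)
    (S : Fin m → Set (Fin n)) (hcov : ∀ i : Fin n, ∃ j, i ∈ S j) :
    (scGame S hcov).KG.Win1 (.conf (.elem ⟨0, hn⟩) {(none : Option (Fin m))} k) ↔
      ∃ S' : Finset (Fin m), S'.card ≤ k ∧ ∀ i : Fin n, ∃ j ∈ S', i ∈ S j := by
  constructor
  · rintro ⟨f1, hf1, hwin⟩
    obtain ⟨N, hN⟩ := hwin (sinkStrat S hcov) (sinkStrat_legal S hcov)
    rcases Nat.even_or_odd' N with ⟨t, rfl | rfl⟩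
    · obtain ⟨w, g, r, hp, hk, hC⟩ := sink_inv S hcov k hn f1 hf1 t
      rw [hp] at hN
      cases w with
      | targ => exact ⟨g, by omega, fun i => hC i⟩
      | elem i => exact hN.elim
      | pair j i => exact hN.elim
      | sink => exact hN.elim
    · obtain ⟨w, g, r, hp, -, -⟩ := sink_inv S hcov k hn f1 hf1 t
      have hmv := (scGame S hcov).KG.move_play hf1 (sinkStrat_legal S hcov)
          (.conf (.elem ⟨0, hn⟩) {(none : Option (Fin m))} k) (2 * t)
      rw [hp] at hmv
      generalize hq : (scGame S hcov).KG.play f1 (sinkStrat S hcov)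
          (.conf (.elem ⟨0, hn⟩) {(none : Option (Fin m))} k) (2 * t + 1) = q at hmv hN
      cases hmv with
      | step _ => exact False.elim hN
  · rintro ⟨S', hScard, hScov⟩
    choose c hc1 hc2 using hScov
    refine ⟨coverStrat c, coverStrat_legal S hcov c hc2, fun f2 hf2 => ?_⟩
    have hn1 : n - 1 < n := by omega
    obtain ⟨g, r, hg, hr, hp⟩ :=
      cover_reaches S hcov S' c hc1 hn k hScard f2 (n - 1) hn1
    obtain ⟨g', r', -, -, hp'⟩ :=
      cover_step S hcov S' c hc1 f2 _ (4 * (n - 1)) ⟨n - 1, hn1⟩ g r hg hr hp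
    refine ⟨4 * (n - 1) + 1 + 1 + 1 + 1, ?_⟩
    rw [hp', dif_neg (show ¬((⟨n - 1, hn1⟩ : Fin n) : ℕ) + 1 < n by
      show ¬(n - 1 + 1 < n); omega)]
    trivial
end
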